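/- arXiv:1105.0679 — 10 statements merged into one kernel-verified Lean document; each statement's English description precedes it below -/
import Mathlib

section
/- Let p be a prime and S = (s_1, ..., s_d) a sequence of nonzero elements of Z/pZ. Then the set Σ(S) of all subset sums of S (including the empty sum 0) has cardinality at least min(p, d+1). -/
open Finset Pointwise

lemma aux_step {p : ℕ} {ι : Type*} [DecidableEq ι] (s : ι → ZMod p) (a : ι) (I : Finset ι)
    (ha : a ∉ I) :
    ((insert a I).powerset.image (fun J => ∑ i ∈ J, s i)) =
      (I.powerset.image (fun J => ∑ i ∈ J, s i)) + ({0, s a} : Finset (ZMod p)) := by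
  ext x
  simp only [mem_image, mem_powerset, Finset.mem_add, mem_insert, mem_singleton]
  constructor
  · rintro ⟨J, hJ, rfl⟩
    by_cases haJ : a ∈ J
    · refine ⟨∑ i ∈ J.erase a, s i, ⟨J.erase a, ?_, rfl⟩, s a, Or.inr rfl, ?_⟩
      · intro i hi
        rcases Finset.mem_insert.1 (hJ (Finset.mem_of_mem_erase hi)) with h | h
        · exact absurd h (Finset.ne_of_mem_erase hi)
        · exact h
      · rw [add_comm, ← Finset.add_sum_erase _ _ haJ]
    · refine ⟨∑ i ∈ J, s i, ⟨J, ?_, rfl⟩, 0, Or.inl rfl, by simp⟩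
      intro i hi
      rcases Finset.mem_insert.1 (hJ hi) with h | h
      · exact absurd (h ▸ hi) haJ
      · exact h
  · rintro ⟨t, ⟨J, hJ, rfl⟩, y, (rfl | rfl), rfl⟩
    · exact ⟨J, hJ.trans (Finset.subset_insert _ _), by simp⟩
    · refine ⟨insert a J, Finset.insert_subset_insert _ hJ, ?_⟩
      rw [Finset.sum_insert (fun h => ha (hJ h)), add_comm]

lemma aux_main {p : ℕ} (hp : p.Prime) {ι : Type*} [DecidableEq ι] (s : ι → ZMod p)
    (hs : ∀ i, s i ≠ 0) (I : Finset ι) :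
    min p (I.card + 1) ≤ (I.powerset.image (fun J => ∑ i ∈ J, s i)).card := by
  induction I using Finset.induction_on with
  | empty => simp
  | @insert a I ha ih =>
    rw [aux_step s a I ha]
    have hne : (I.powerset.image (fun J => ∑ i ∈ J, s i)).Nonempty :=
      ⟨0, Finset.mem_image.2 ⟨∅, by simp⟩⟩
    have h2 : ({0, s a} : Finset (ZMod p)).card = 2 := by
      rw [Finset.card_insert_of_notMem (fun h => hs a (Finset.mem_singleton.1 h).symm), Finset.card_singleton]
    have hcd := ZMod.cauchy_davenport hp hne ⟨0, Finset.mem_insert_self 0 ({s a} : Finset (ZMod p))⟩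
    rw [h2, Finset.card_insert_of_notMem ha] at *
    omega

/-- For a prime `p` and a sequence `s₁, …, s_d` of nonzero elements of `ℤ/pℤ`,
the set of all subset sums has cardinality at least `min p (d+1)`. -/
theorem stmt0 (p : ℕ) (hp : p.Prime) (d : ℕ) (s : Fin d → ZMod p)
    (hs : ∀ i, s i ≠ 0) :
    min p (d + 1) ≤
      ((Finset.univ : Finset (Fin d)).powerset.image (fun I => ∑ i ∈ I, s i)).card := by
  have := aux_main hp s hs (Finset.univ : Finset (Fin d))
  simpa using this
end

section
/- Let p be a prime and S a sequence over Z/pZ in which every element occurs with multiplicity at most h. If the length of S is at least p, then S has a nonempty zero-sum subsequence of length at most h. -/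
/-!
If every element occurs at most `k` times in a sequence `S` avoiding `0`, the sums of its
subsequences of length at most `k` form a set of size at least `min p (|S| + 1)`: peeling off the
layer of distinct elements `S.dedup`, this set contains `{0} ∪ S.dedup` plus the corresponding set
for `S - S.dedup` and `k - 1`, and Cauchy–Davenport applies. For the theorem (with `0 ∉ S`), one
more Cauchy–Davenport step, with `S.dedup` alone against the set for `S - S.dedup` and `h - 1`,
gives a sumset of size at least `min p |S| = p`; so `0 = x + t` with `x ∈ S` and `t` the sum of at
most `h - 1` further terms.
-/

open Pointwise
open scoped Finset

namespace Multiset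

variable {α : Type*} [DecidableEq α]

lemma count_sub_dedup_le {S : Multiset α} {k : ℕ} (hS : ∀ x, S.count x ≤ k + 1) (x : α) :
    (S - S.dedup).count x ≤ k := by
  rw [count_sub, count_dedup]
  split_ifs with hx
  · exact Nat.sub_le_of_le_add (hS x)
  · simp [count_eq_zero.2 hx]

lemma dedup_add_sub_dedup (S : Multiset α) : S.dedup + (S - S.dedup) = S :=
  add_tsub_cancel_of_le (dedup_le S)

lemma card_toFinset_add_card_sub_dedup (S : Multiset α) :
    #S.toFinset + (S - S.dedup).card = S.card := by
  rw [card_toFinset, ← card_add, dedup_add_sub_dedup]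

section AddCommMonoid

variable [AddCommMonoid α]

def boundedSubsums (S : Multiset α) (k : ℕ) : Finset α :=
  ((S.powerset.filter fun T => card T ≤ k).map sum).toFinset

lemma mem_boundedSubsums {S : Multiset α} {k : ℕ} {x : α} :
    x ∈ S.boundedSubsums k ↔ ∃ T ≤ S, card T ≤ k ∧ T.sum = x := by
  simp [boundedSubsums, and_assoc]

lemma zero_mem_boundedSubsums (S : Multiset α) (k : ℕ) : 0 ∈ S.boundedSubsums k :=
  mem_boundedSubsums.2 ⟨0, zero_le S, by simp, sum_zero⟩

lemma boundedSubsums_zero (k : ℕ) : (0 : Multiset α).boundedSubsums k = {0} := by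
  ext x
  simp [mem_boundedSubsums, eq_comm]

lemma boundedSubsums_dedup_one (S : Multiset α) :
    S.dedup.boundedSubsums 1 = insert 0 S.toFinset := by
  ext x
  simp only [mem_boundedSubsums, Finset.mem_insert, mem_toFinset]
  constructor
  · rintro ⟨T, hTS, hT1, rfl⟩
    rcases Nat.le_one_iff_eq_zero_or_eq_one.1 hT1 with hT | hT
    · exact Or.inl (by simp [card_eq_zero.1 hT])
    obtain ⟨y, rfl⟩ := card_eq_one.1 hT
    exact Or.inr (by simpa using mem_dedup.1 (singleton_le.1 hTS))
  · rintro (rfl | hx)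
    · exact ⟨0, zero_le _, by simp, sum_zero⟩
    · exact ⟨{x}, singleton_le.2 (mem_dedup.2 hx), by simp, sum_singleton x⟩

lemma boundedSubsums_add_subset (S S' : Multiset α) (j k : ℕ) :
    S.boundedSubsums j + S'.boundedSubsums k ⊆ (S + S').boundedSubsums (j + k) := by
  intro x hx
  obtain ⟨y, hy, z, hz, rfl⟩ := Finset.mem_add.1 hx
  obtain ⟨T, hTS, hTj, rfl⟩ := mem_boundedSubsums.1 hy
  obtain ⟨T', hTS', hTk, rfl⟩ := mem_boundedSubsums.1 hz
  exact mem_boundedSubsums.2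
    ⟨T + T', add_le_add hTS hTS', by rw [card_add]; omega, sum_add T T'⟩

end AddCommMonoid

end Multiset

open Multiset

lemma ZMod.min_le_card_boundedSubsums {p : ℕ} (hp : p.Prime) (k : ℕ) {S : Multiset (ZMod p)}
    (h0 : (0 : ZMod p) ∉ S) (hS : ∀ x, S.count x ≤ k) :
    min p (S.card + 1) ≤ #(S.boundedSubsums k) := by
  induction k generalizing S with
  | zero =>
    obtain rfl : S = 0 := Multiset.ext.2 fun x => by simpa using hS x
    simp [boundedSubsums_zero]
  | succ k ih =>
    have h0' : (0 : ZMod p) ∉ S - S.dedup := mt (mem_of_le (Multiset.sub_le_self _ _)) h0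
    have hsums := ih h0' (count_sub_dedup_le hS)
    have hA : #(insert 0 S.toFinset) = #S.toFinset + 1 :=
      Finset.card_insert_of_notMem (by rwa [Multiset.mem_toFinset])
    have hcd := ZMod.cauchy_davenport hp (Finset.insert_nonempty 0 S.toFinset)
      ⟨0, zero_mem_boundedSubsums (S - S.dedup) k⟩
    have hsub := Finset.card_le_card (boundedSubsums_add_subset S.dedup (S - S.dedup) 1 k)
    rw [boundedSubsums_dedup_one, dedup_add_sub_dedup, add_comm 1 k] at hsub
    have hcard := card_toFinset_add_card_sub_dedup S
    rw [hA] at hcd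
    omega

/-- If a sequence (multiset) `S` over `ℤ/pℤ` (`p` prime) has every element with
multiplicity at most `h` and `|S| ≥ p`, then `S` has a nonempty zero-sum
subsequence of length at most `h`. -/
theorem stmt1 (p : ℕ) (hp : p.Prime) (h : ℕ) (S : Multiset (ZMod p))
    (hmult : ∀ x : ZMod p, S.count x ≤ h) (hcard : p ≤ Multiset.card S) :
    ∃ T : Multiset (ZMod p), T ≤ S ∧ T ≠ 0 ∧ Multiset.card T ≤ h ∧ T.sum = 0 := by
  by_cases h0 : (0 : ZMod p) ∈ S
  · exact ⟨{0}, singleton_le.2 h0, singleton_ne_zero 0,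
      (card_singleton 0).trans_le ((one_le_count_iff_mem.2 h0).trans (hmult 0)), sum_singleton 0⟩
  obtain ⟨a, ha⟩ := card_pos_iff_exists_mem.1 (hp.pos.trans_le hcard)
  obtain ⟨k, rfl⟩ : ∃ k, h = k + 1 :=
    Nat.exists_eq_add_of_le' ((one_le_count_iff_mem.2 ha).trans (hmult a))
  have hsums := ZMod.min_le_card_boundedSubsums hp k
    (mt (mem_of_le (Multiset.sub_le_self _ _)) h0) (count_sub_dedup_le hmult)
  have hA : S.toFinset.Nonempty := ⟨a, mem_toFinset.2 ha⟩
  have hcd := ZMod.cauchy_davenport hp hA ⟨0, zero_mem_boundedSubsums (S - S.dedup) k⟩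
  have hbig : p ≤ #(S.toFinset + (S - S.dedup).boundedSubsums k) := by
    have := card_toFinset_add_card_sub_dedup S
    have := hA.card_pos
    omega
  have : Fact p.Prime := ⟨hp⟩
  have huniv : S.toFinset + (S - S.dedup).boundedSubsums k = Finset.univ :=
    Finset.eq_univ_of_card _ ((Finset.card_le_univ _).antisymm (by rwa [ZMod.card]))
  obtain ⟨x, hx, t, ht, hxt⟩ := Finset.mem_add.1 (huniv ▸ Finset.mem_univ (0 : ZMod p))
  obtain ⟨T, hTS, hTk, rfl⟩ := mem_boundedSubsums.1 ht
  refine ⟨x ::ₘ T, ?_, cons_ne_zero, by simpa using hTk, by simpa using hxt⟩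
  rw [← dedup_add_sub_dedup S, ← singleton_add]
  exact add_le_add (singleton_le.2 (mem_dedup.2 (mem_toFinset.1 hx))) hTS
end

section
/- Every zero-sum sequence over Z/2Z × Z/2Z of length at least 8 can be factored into at least 4 nonempty zero-sum subsequences. Equivalently, the generalized Davenport constant satisfies D_3(Z/2Z × Z/2Z) = 7. -/
abbrev G := ZMod 2 × ZMod 2

/-- The generalized Davenport constant `D_k(A)`: the maximal length of a zero-sum
sequence (multiset) over `A` that cannot be factored into more than `k` nonempty
zero-sum subsequences. -/
noncomputable def DavK (A : Type*) [AddCommGroup A] (k : ℕ) : ℕ :=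
  sSup {n : ℕ | ∃ S : Multiset A, S.sum = 0 ∧ Multiset.card S = n ∧
    ∀ P : Multiset (Multiset A), P.sum = S →
      (∀ T ∈ P, T ≠ 0 ∧ Multiset.sum T = 0) → Multiset.card P ≤ k}

-- extraction lemma
lemma extract (S : Multiset G) (h4 : 4 ≤ Multiset.card S) :
    ∃ T, T ≤ S ∧ T ≠ 0 ∧ T.sum = 0 ∧ Multiset.card T ≤ 2 := by
  by_cases h0 : (0 : G) ∈ S
  · exact ⟨{0}, by simpa using Multiset.singleton_le.2 h0, by simp, by simp, by simp⟩
  · have : ∃ x : G, 2 ≤ S.count x := by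
      by_contra h
      push_neg at h
      have hnd : S.Nodup := Multiset.nodup_iff_count_le_one.2 fun a => by
        have := h a; omega
      have h1 : S.toFinset.card = Multiset.card S := Multiset.toFinset_card_of_nodup hnd
      have h2 : S.toFinset ⊆ Finset.univ.erase (0 : G) := by
        intro x hx
        refine Finset.mem_erase.2 ⟨?_, Finset.mem_univ x⟩
        rintro rfl; exact h0 (Multiset.mem_toFinset.1 hx)
      have := Finset.card_le_card h2
      have hc : (Finset.univ.erase (0 : G)).card = 3 := by decide
      omega
    obtain ⟨x, hx⟩ := this
    refine ⟨Multiset.replicate 2 x, Multiset.le_count_iff_replicate_le.1 hx, by simp, ?_, by simp⟩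
    have hxx : ∀ y : G, y + y = 0 := by decide
    simp [Multiset.sum_replicate, two_nsmul, hxx]

lemma sum_sub_zero {S T : Multiset G} (hT : T ≤ S) (hS : S.sum = 0) (hTs : T.sum = 0) :
    (S - T).sum = 0 := by
  have h : (S - T).sum + T.sum = S.sum := by
    rw [← Multiset.sum_add, tsub_add_cancel_of_le hT]
  rw [hTs, hS, add_zero] at h
  exact h

lemma main_split (S : Multiset G) (hs : S.sum = 0) (h8 : 8 ≤ Multiset.card S) :
    ∃ P : Multiset (Multiset G), P.sum = S ∧
      (∀ T ∈ P, T ≠ 0 ∧ Multiset.sum T = 0) ∧ 4 ≤ Multiset.card P := by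
  obtain ⟨T1, hT1le, hT1ne, hT1s, hT1c⟩ := extract S (by omega)
  have hc1 : Multiset.card (S - T1) = Multiset.card S - Multiset.card T1 :=
    Multiset.card_sub hT1le
  obtain ⟨T2, hT2le, hT2ne, hT2s, hT2c⟩ := extract (S - T1) (by omega)
  have hc2 : Multiset.card (S - T1 - T2) = Multiset.card (S - T1) - Multiset.card T2 :=
    Multiset.card_sub hT2le
  obtain ⟨T3, hT3le, hT3ne, hT3s, hT3c⟩ := extract (S - T1 - T2) (by omega)
  have hc3 : Multiset.card (S - T1 - T2 - T3) = Multiset.card (S - T1 - T2) - Multiset.card T3 :=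
    Multiset.card_sub hT3le
  set R := S - T1 - T2 - T3 with hR
  have hs1 : (S - T1).sum = 0 := sum_sub_zero hT1le hs hT1s
  have hs2 : (S - T1 - T2).sum = 0 := sum_sub_zero hT2le hs1 hT2s
  have hs3 : R.sum = 0 := sum_sub_zero hT3le hs2 hT3s
  have hRne : R ≠ 0 := by
    intro h
    have := Multiset.card_eq_zero.2 h
    omega
  refine ⟨{T1, T2, T3, R}, ?_, ?_, by simp⟩
  · show T1 + (T2 + (T3 + (R + 0))) = S
    rw [add_zero, hR, add_tsub_cancel_of_le hT3le, add_tsub_cancel_of_le hT2le,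
      add_tsub_cancel_of_le hT1le]
  · intro T hT
    simp only [Multiset.insert_eq_cons, Multiset.mem_cons, Multiset.mem_singleton] at hT
    rcases hT with rfl | rfl | rfl | rfl
    exacts [⟨hT1ne, hT1s⟩, ⟨hT2ne, hT2s⟩, ⟨hT3ne, hT3s⟩, ⟨hRne, hs3⟩]

def S7 : Multiset G := {(1,0),(1,0),(1,0),(0,1),(0,1),(0,1),(1,1)}

lemma two_mul_card_le (Q : Multiset (Multiset G)) (h : ∀ T ∈ Q, 2 ≤ Multiset.card T) :
    2 * Multiset.card Q ≤ Multiset.card Q.sum := by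
  induction Q using Multiset.induction with
  | empty => simp
  | cons a s ih =>
    have ha := h a (Multiset.mem_cons_self a s)
    have := ih fun n hn => h n (Multiset.mem_cons_of_mem hn)
    simp only [Multiset.card_cons, Multiset.sum_cons, Multiset.card_add]
    omega

lemma seven_mem : ∃ S : Multiset G, S.sum = 0 ∧ Multiset.card S = 7 ∧
    ∀ P : Multiset (Multiset G), P.sum = S →
      (∀ T ∈ P, T ≠ 0 ∧ Multiset.sum T = 0) → Multiset.card P ≤ 3 := by
  refine ⟨S7, by decide, by decide, ?_⟩
  intro P hPs hP
  have hno : ∀ x ∈ S7, x ≠ (0 : G) := by decide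
  have hcards : ∀ T ∈ P, 2 ≤ Multiset.card T := by
    intro T hT
    obtain ⟨hne, hsum⟩ := hP T hT
    rcases Nat.lt_or_ge (Multiset.card T) 2 with h | h
    · interval_cases hc : Multiset.card T
      · exact absurd (Multiset.card_eq_zero.1 hc) hne
      · obtain ⟨x, rfl⟩ := Multiset.card_eq_one.1 hc
        have hx : x ∈ P.sum := by
          obtain ⟨P', rfl⟩ := Multiset.exists_cons_of_mem hT
          rw [Multiset.sum_cons]
          exact Multiset.mem_of_le (Multiset.le_add_right _ _)
            (Multiset.mem_singleton_self x)
        rw [hPs] at hx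
        exact absurd (by simpa using hsum) (hno x hx)
    · exact h
  have h2 : 2 * Multiset.card P ≤ Multiset.card P.sum := two_mul_card_le P hcards
  have h7 : Multiset.card P.sum = 7 := by rw [hPs]; decide
  omega

/-- Every zero-sum sequence over `ℤ/2 × ℤ/2` of length at least 8 factors into at
least 4 nonempty zero-sum subsequences; equivalently `D₃(ℤ/2 × ℤ/2) = 7`. -/
theorem stmt2 :
    (∀ S : Multiset (ZMod 2 × ZMod 2), S.sum = 0 → 8 ≤ Multiset.card S →
      ∃ P : Multiset (Multiset (ZMod 2 × ZMod 2)), P.sum = S ∧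
        (∀ T ∈ P, T ≠ 0 ∧ Multiset.sum T = 0) ∧ 4 ≤ Multiset.card P) ∧
    DavK (ZMod 2 × ZMod 2) 3 = 7 := by
  refine ⟨main_split, ?_⟩
  unfold DavK
  have hub : ∀ n ∈ {n : ℕ | ∃ S : Multiset G, S.sum = 0 ∧ Multiset.card S = n ∧
      ∀ P : Multiset (Multiset G), P.sum = S →
        (∀ T ∈ P, T ≠ 0 ∧ Multiset.sum T = 0) → Multiset.card P ≤ 3}, n ≤ 7 := by
    rintro n ⟨S, hs, hc, hmax⟩
    by_contra h
    push_neg at h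
    obtain ⟨P, hPs, hPz, hP4⟩ := main_split S hs (by omega)
    have := hmax P hPs hPz
    omega
  have hmem : 7 ∈ {n : ℕ | ∃ S : Multiset G, S.sum = 0 ∧ Multiset.card S = n ∧
      ∀ P : Multiset (Multiset G), P.sum = S →
        (∀ T ∈ P, T ≠ 0 ∧ Multiset.sum T = 0) → Multiset.card P ≤ 3} := seven_mem
  exact le_antisymm (csSup_le ⟨7, hmem⟩ hub) (le_csSup ⟨7, hub⟩ hmem)
end

section
/- For positive integers n, m, k with n dividing m, the generalized Davenport constant of Z/nZ × Z/mZ satisfies D_k(Z/nZ × Z/mZ) = km + n - 1. -/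
/-!
Lower bound: in a factorisation of `(1,0)^(n-1) (0,1)^(km-1) (1,1)` into zero-sum parts, every part
contains a positive multiple of `m` terms with second coordinate `1` (a part without such terms
would be `(1,0)^j` with `0 < j < n`), and there are only `km` of them.

Upper bound: Chevalley–Warning gives `D(C_p²) ≤ 2p - 1` and `η(C_p²) ≤ 3p - 2`, and both bounds
pass from `C_a²` and `C_b²` to `C_{ab}²` by cutting sequences into short blocks whose sums lie in
the kernel of `C_{ab}² → C_a²`, a copy of `C_b²`. Cutting greedily, a zero-sum sequence over `C_n²`
of length `≥ (j + 1) n` has `j + 1` zero-sum parts. A zero-sum sequence over `C_n ⊕ C_{nt}` of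
length `≥ km + n` thus has `kt + 1` parts with sums in the kernel `C_t` of the projection to
`C_n²`, and by pigeonhole `kt + 1` elements of `C_t` fall into `k + 1` zero-sum groups.
-/

open Multiset Function

namespace Multiset

variable {α β : Type*}

theorem exists_le_card_eq {s : Multiset α} {n : ℕ} (h : n ≤ card s) :
    ∃ t ≤ s, card t = n :=
  ⟨↑(s.toList.take n), by simpa using (coe_le.2 (List.take_sublist n s.toList).subperm),
    by simp [h]⟩

theorem exists_le_map_eq (f : α → β) {S : Multiset α} {T' : Multiset β} (h : T' ≤ S.map f) :
    ∃ T ≤ S, T.map f = T' := by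
  induction S using Quotient.inductionOn
  induction T' using Quotient.inductionOn
  obtain ⟨l, hperm, hsub⟩ := h
  obtain ⟨l', hl', rfl⟩ := List.sublist_map_iff.1 hsub
  exact ⟨l', coe_le.2 hl'.subperm, Quot.sound hperm⟩

theorem exists_sum_eq_and_map_map_eq (f : α → β) {S : Multiset α}
    {P' : Multiset (Multiset β)} (h : P'.sum = S.map f) :
    ∃ P : Multiset (Multiset α), P.sum = S ∧ P.map (map f) = P' := by
  induction P' using Multiset.induction generalizing S with
  | empty => exact ⟨0, by simpa [eq_comm] using h, rfl⟩
  | cons T' P' ih =>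
    rw [sum_cons] at h
    obtain ⟨T, hTS, hT⟩ := exists_le_map_eq f (h ▸ le_add_right T' P'.sum)
    obtain ⟨S', rfl⟩ := exists_add_of_le hTS
    rw [map_add, hT] at h
    obtain ⟨P, rfl, rfl⟩ := ih (add_left_cancel h)
    exact ⟨T ::ₘ P, sum_cons .., by rw [map_cons, hT]⟩

theorem card_sum_le_mul {e : ℕ} {P : Multiset (Multiset α)} (hP : ∀ T ∈ P, card T ≤ e) :
    card P.sum ≤ e * card P := by
  calc card P.sum = (P.map card).sum := card_join P
    _ ≤ card (P.map card) • e := sum_le_card_nsmul _ _ fun x hx => by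
          obtain ⟨T, hT, rfl⟩ := mem_map.1 hx
          exact hP T hT
    _ = e * card P := by simp [mul_comm]

end Multiset

section ZeroSum

variable {A B : Type*} [AddCommGroup A] [AddCommGroup B]

def SplitsOver (f : A →+ B) (j : ℕ) (S : Multiset A) : Prop :=
  ∃ P : Multiset (Multiset A), P.sum = S ∧ (∀ T ∈ P, T ≠ 0 ∧ f T.sum = 0) ∧
    j ≤ card P

/- `IsDavenportBound A d` says `D(A) ≤ d`, and `IsEtaBound A c (exp A)` says `η(A) ≤ c`. -/

variable (A) in
def IsDavenportBound (d : ℕ) : Prop :=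
  ∀ S : Multiset A, d ≤ card S → ∃ T ≤ S, T ≠ 0 ∧ T.sum = 0

variable (A) in
def IsEtaBound (c e : ℕ) : Prop :=
  ∀ S : Multiset A, c ≤ card S → ∃ T ≤ S, T ≠ 0 ∧ T.sum = 0 ∧ card T ≤ e

variable {f : A →+ B} {j k : ℕ} {S : Multiset A}

theorem splitsOver_zero (f : A →+ B) : SplitsOver f 0 0 :=
  ⟨0, rfl, by simp, le_rfl⟩

theorem splitsOver_one {T : Multiset A} (hT : T ≠ 0) (hf : f T.sum = 0) : SplitsOver f 1 T :=
  ⟨{T}, sum_singleton T, by simpa using ⟨hT, hf⟩, le_rfl⟩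

theorem SplitsOver.add {X Y : Multiset A} (hX : SplitsOver f j X) (hY : SplitsOver f k Y) :
    SplitsOver f (j + k) (X + Y) := by
  obtain ⟨P, rfl, hP, hj⟩ := hX
  obtain ⟨Q, rfl, hQ, hk⟩ := hY
  exact ⟨P + Q, sum_add P Q, fun T hT => (mem_add.1 hT).elim (hP T) (hQ T),
    by rw [card_add]; omega⟩

theorem SplitsOver.mono {j' : ℕ} (h : SplitsOver f j S) (hj : j' ≤ j) : SplitsOver f j' S :=
  let ⟨P, hP, hparts, hj'⟩ := h
  ⟨P, hP, hparts, hj.trans hj'⟩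

theorem SplitsOver.le_card (h : SplitsOver f j S) : j ≤ card S := by
  obtain ⟨P, rfl, hP, hj⟩ := h
  calc j ≤ card P := hj
    _ = card (P.map card) • 1 := by simp
    _ ≤ (P.map card).sum := card_nsmul_le_sum fun x hx => by
          obtain ⟨T, hT, rfl⟩ := mem_map.1 hx
          exact card_pos.2 (hP T hT).1
    _ = card P.sum := (card_join P).symm

theorem SplitsOver.of_map {S : Multiset A} (h : SplitsOver (.id B) j (S.map f)) :
    SplitsOver f j S := by
  obtain ⟨P', hP', hparts, hj⟩ := h
  obtain ⟨P, rfl, rfl⟩ := exists_sum_eq_and_map_map_eq f hP'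
  refine ⟨P, rfl, fun T hT => ?_, by simpa using hj⟩
  obtain ⟨hne, hsum⟩ := hparts (T.map f) (mem_map_of_mem _ hT)
  exact ⟨by rintro rfl; simp at hne, by simpa [map_multiset_sum] using hsum⟩

theorem not_splitsOver_id_iff :
    ¬ SplitsOver (.id A) (k + 1) S ↔ ∀ P : Multiset (Multiset A), P.sum = S →
      (∀ T ∈ P, T ≠ 0 ∧ T.sum = 0) → card P ≤ k := by
  simp [SplitsOver]

theorem IsEtaBound.isDavenportBound {c e : ℕ} (h : IsEtaBound A c e) : IsDavenportBound A c :=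
  fun S hS => let ⟨T, hTS, hT, hsum, _⟩ := h S hS; ⟨T, hTS, hT, hsum⟩

theorem IsEtaBound.exists_blocks {c e : ℕ} (h : IsEtaBound B c e) (f : A →+ B)
    (S : Multiset A) : ∃ (P : Multiset (Multiset A)) (R : Multiset A), P.sum + R = S ∧
      (∀ T ∈ P, T ≠ 0 ∧ f T.sum = 0 ∧ card T ≤ e) ∧ card R < c := by
  induction hN : card S using Nat.strong_induction_on generalizing S with
  | _ N ih =>
  by_cases hc : card S < c
  · exact ⟨0, S, by simp, by simp, hc⟩
  obtain ⟨T', hT'S, hT'0, hT'sum, hT'e⟩ := h (S.map f) (by simpa using hc)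
  obtain ⟨T, hTS, rfl⟩ := exists_le_map_eq f hT'S
  obtain ⟨S', rfl⟩ := exists_add_of_le hTS
  have hT : T ≠ 0 := by rintro rfl; simp at hT'0
  obtain ⟨P, R, rfl, hP, hR⟩ :=
    ih (card S') (by rw [← hN, card_add]; have := card_pos.2 hT; omega) S' rfl
  refine ⟨T ::ₘ P, R, by rw [sum_cons, add_assoc], ?_, hR⟩
  rintro U hU
  rcases mem_cons.1 hU with rfl | hU
  · exact ⟨hT, by rwa [map_multiset_sum], by simpa using hT'e⟩
  · exact hP U hU

theorem IsEtaBound.splitsOver {c e d : ℕ} (hη : IsEtaBound A c e)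
    (hrem : ∀ R : Multiset A, R.sum = 0 → card R < c →
      ∃ r, SplitsOver (.id A) r R ∧ card R ≤ r * e + d)
    (hS : S.sum = 0) (hcard : j * e + d < card S) : SplitsOver (.id A) (j + 1) S := by
  obtain ⟨P, R, rfl, hP, hR⟩ := hη.exists_blocks (.id A) S
  have hPsum : P.sum.sum = 0 :=
    sum_join.trans (sum_eq_zero fun x hx => by
      obtain ⟨T, hT, rfl⟩ := mem_map.1 hx
      exact (hP T hT).2.1)
  obtain ⟨r, hRsplit, hRcard⟩ := hrem R (by rwa [sum_add, hPsum, zero_add] at hS) hR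
  have hblocks : SplitsOver (.id A) (card P) P.sum :=
    ⟨P, rfl, fun T hT => ⟨(hP T hT).1, (hP T hT).2.1⟩, le_rfl⟩
  have hPcard := card_sum_le_mul fun T hT => (hP T hT).2.2
  have : e * j < e * (card P + r) := by
    rw [card_add] at hcard
    rw [mul_add]
    nlinarith
  exact (hblocks.add hRsplit).mono (by have := Nat.lt_of_mul_lt_mul_left this; omega)

theorem IsDavenportBound.exists_split {d : ℕ} (hD : IsDavenportBound A d) {R : Multiset A}
    (hR : R.sum = 0) (hcard : d < card R) :
    ∃ U V, U + V = R ∧ U ≠ 0 ∧ V ≠ 0 ∧ U.sum = 0 ∧ V.sum = 0 := by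
  obtain ⟨a, ha⟩ := card_pos_iff_exists_mem.1 (by omega : 0 < card R)
  obtain ⟨R', rfl⟩ := exists_cons_of_mem ha
  obtain ⟨U, hUR, hU, hUsum⟩ := hD R' (by rw [card_cons] at hcard; omega)
  obtain ⟨V, rfl⟩ := exists_add_of_le hUR
  refine ⟨U, a ::ₘ V, add_cons .., hU, cons_ne_zero, hUsum, ?_⟩
  simpa [hUsum, add_left_comm a U.sum] using hR

theorem IsDavenportBound.exists_splitsOver {e : ℕ} (hD : IsDavenportBound A (2 * e - 1))
    {R : Multiset A} (hR : R.sum = 0) (hcard : card R < 3 * e - 2) :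
    ∃ r, SplitsOver (.id A) r R ∧ card R ≤ r * e + (e - 1) := by
  rcases eq_or_ne R 0 with rfl | hR0
  · exact ⟨0, splitsOver_zero _, by simp⟩
  by_cases h2 : card R < 2 * e
  · exact ⟨1, splitsOver_one hR0 hR, by omega⟩
  obtain ⟨U, V, rfl, hU, hV, hUsum, hVsum⟩ := hD.exists_split hR (by omega)
  exact ⟨2, (splitsOver_one hU hUsum).add (splitsOver_one hV hVsum), by omega⟩

theorem isEtaBound_card [Fintype A] : IsEtaBound A (Fintype.card A) (Fintype.card A) := by
  intro S hS
  set l := S.toList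
  have hl : Fintype.card A ≤ l.length := by simpa [l] using hS
  obtain ⟨i, j, hij, heq⟩ := Fintype.exists_ne_map_eq_of_card_lt
    (fun i : Fin (Fintype.card A + 1) => (l.take i).sum) (by simp)
  wlog hlt : i < j generalizing i j
  · exact this j i hij.symm heq.symm (lt_of_le_of_ne (not_lt.1 hlt) hij.symm)
  have hij : (i : ℕ) < j := hlt
  have hlen : ((l.take j).drop i).length = j - i := by
    rw [List.length_drop, List.length_take, min_eq_left (by omega)]
  have hsplit : (l.take j).sum = (l.take i).sum + ((l.take j).drop i).sum := by
    conv_lhs => rw [← List.take_append_drop i (l.take j)]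
    rw [List.sum_append, List.take_take, min_eq_left hij.le]
  refine ⟨↑((l.take j).drop i), ?_, ?_, ?_, ?_⟩
  · simpa [l] using coe_le.2 (((l.take j).drop_sublist i).trans (l.take_sublist j)).subperm
  · rw [Ne, coe_eq_zero, ← List.length_eq_zero_iff, hlen]
    omega
  · simpa [heq] using hsplit
  · rw [coe_card, hlen]
    omega

theorem splitsOver_of_mul_card_lt [Fintype A] (hS : S.sum = 0)
    (hcard : j * Fintype.card A < card S) : SplitsOver (.id A) (j + 1) S :=
  isEtaBound_card.splitsOver (d := 0) (fun R hR _ => by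
    rcases eq_or_ne R 0 with rfl | hR0
    · exact ⟨0, splitsOver_zero _, by simp⟩
    · exact ⟨1, splitsOver_one hR0 hR, by omega⟩) hS (by simpa using hcard)

end ZeroSum

section Kernel

variable {A B C : Type*} [AddCommGroup A] [AddCommGroup B] [AddCommGroup C]
  {f : A →+ B} {g : C →+ A}

theorem sum_sum_eq_map_sum_map {φ : Multiset A → C} {Q : Multiset (Multiset A)}
    (h : ∀ T ∈ Q, g (φ T) = T.sum) : Q.sum.sum = g (Q.map φ).sum := by
  rw [map_multiset_sum, map_map]
  exact sum_join.trans (congrArg sum (map_congr rfl fun T hT => (h T hT).symm))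

theorem exists_le_sum_sum_eq_zero_of_le_map (g : C →+ A) {φ : Multiset A → C}
    {P : Multiset (Multiset A)} (hφ : ∀ T ∈ P, g (φ T) = T.sum) (hP : ∀ T ∈ P, T ≠ 0)
    {W : Multiset C} (hWP : W ≤ P.map φ) (hW : W ≠ 0) (hWsum : W.sum = 0) :
    ∃ Q ≤ P, card Q = card W ∧ Q.sum ≠ 0 ∧ Q.sum.sum = 0 := by
  obtain ⟨Q, hQP, rfl⟩ := exists_le_map_eq φ hWP
  refine ⟨Q, hQP, (card_map ..).symm, fun h0 => ?_, ?_⟩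
  · obtain ⟨T, hT⟩ := exists_mem_of_ne_zero (show Q ≠ 0 by rintro rfl; simp at hW)
    exact hP T (mem_of_le hQP hT) (sum_eq_zero_iff.1 h0 T hT)
  · rw [sum_sum_eq_map_sum_map fun T hT => hφ T (mem_of_le hQP hT), hWsum, _root_.map_zero]

theorem IsEtaBound.of_ker (hker : f.ker ≤ g.range) {a b c c' : ℕ} (hB : IsEtaBound B c a)
    (hC : IsEtaBound C c' b) : IsEtaBound A (a * (c' - 1) + c) (a * b) := by
  intro S hS
  obtain ⟨P, R, rfl, hP, hR⟩ := hB.exists_blocks f S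
  have hφ : ∀ T ∈ P, g (invFun g T.sum) = T.sum := fun T hT => invFun_eq (hker (hP T hT).2.1)
  have hPcard : c' ≤ card P := by
    have := card_sum_le_mul fun T hT => (hP T hT).2.2
    have : a * (c' - 1) < a * card P := by rw [card_add] at hS; omega
    have := Nat.lt_of_mul_lt_mul_left this
    omega
  obtain ⟨W, hWP, hW, hWsum, hWb⟩ := hC (P.map fun T => invFun g T.sum) (by simpa using hPcard)
  obtain ⟨Q, hQP, hQW, hQ, hQsum⟩ :=
    exists_le_sum_sum_eq_zero_of_le_map g hφ (fun T hT => (hP T hT).1) hWP hW hWsum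
  obtain ⟨Q', rfl⟩ := exists_add_of_le hQP
  refine ⟨Q.sum, by rw [sum_add, add_assoc]; exact le_self_add, hQ, hQsum, ?_⟩
  calc card Q.sum ≤ a * card Q := card_sum_le_mul fun T hT => (hP T (mem_add.2 (.inl hT))).2.2
    _ ≤ a * b := Nat.mul_le_mul_left a (hQW ▸ hWb)

theorem IsDavenportBound.of_ker (hker : f.ker ≤ g.range) {a c d d' : ℕ}
    (hη : IsEtaBound B c a) (hB : IsDavenportBound B d) (hcd : c ≤ a + d)
    (hC : IsDavenportBound C d') : IsDavenportBound A (a * (d' - 1) + d) := by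
  intro S hS
  obtain ⟨P, R, rfl, hP, hR⟩ := hη.exists_blocks f S
  have hPcard := card_sum_le_mul fun T hT => (hP T hT).2.2
  rw [card_add] at hS
  -- `d'` blocks with sums in `ker f`; a long remainder yields one more block by `D(B) ≤ d`
  obtain ⟨P', hP'S, hP', hd'⟩ : ∃ P' : Multiset (Multiset A), P'.sum ≤ P.sum + R ∧
      (∀ T ∈ P', T ≠ 0 ∧ f T.sum = 0) ∧ d' ≤ card P' := by
    by_cases hRd : card R < d
    · refine ⟨P, le_self_add, fun T hT => ⟨(hP T hT).1, (hP T hT).2.1⟩, ?_⟩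
      have := Nat.lt_of_mul_lt_mul_left (a := a) (b := d' - 1) (c := card P) (by omega)
      omega
    obtain ⟨U', hU'R, hU', hU'sum⟩ := hB (R.map f) (by simpa using hRd)
    obtain ⟨U, hUR, rfl⟩ := exists_le_map_eq f hU'R
    refine ⟨U ::ₘ P, by rw [sum_cons, add_comm P.sum]; exact add_le_add_left hUR _, ?_, ?_⟩
    · rintro T hT
      rcases mem_cons.1 hT with rfl | hT
      · exact ⟨by rintro rfl; simp at hU', by rwa [map_multiset_sum]⟩
      · exact ⟨(hP T hT).1, (hP T hT).2.1⟩
    · have := Nat.lt_of_mul_lt_mul_left (a := a) (b := d' - 1) (c := card P + 1)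
        (by rw [mul_add]; omega)
      rw [card_cons]
      omega
  have hφ : ∀ T ∈ P', g (invFun g T.sum) = T.sum := fun T hT => invFun_eq (hker (hP' T hT).2)
  obtain ⟨W, hWP, hW, hWsum⟩ := hC (P'.map fun T => invFun g T.sum) (by simpa using hd')
  obtain ⟨Q, hQP, -, hQ, hQsum⟩ :=
    exists_le_sum_sum_eq_zero_of_le_map g hφ (fun T hT => (hP' T hT).1) hWP hW hWsum
  obtain ⟨Q', rfl⟩ := exists_add_of_le hQP
  exact ⟨Q.sum, le_trans (by rw [sum_add]; exact le_self_add) hP'S, hQ, hQsum⟩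

theorem SplitsOver.of_ker (hg : Injective g) (hker : f.ker ≤ g.range) {j k : ℕ}
    (hC : ∀ Z : Multiset C, Z.sum = 0 → j ≤ card Z → SplitsOver (.id C) k Z)
    {S : Multiset A} (hS : S.sum = 0) (h : SplitsOver f j S) : SplitsOver (.id A) k S := by
  obtain ⟨P, rfl, hP, hj⟩ := h
  set φ := fun T : Multiset A => invFun g T.sum
  have hφ : ∀ T ∈ P, g (φ T) = T.sum := fun T hT => invFun_eq (hker (hP T hT).2)
  have hZ : (P.map φ).sum = 0 := hg (by rw [← sum_sum_eq_map_sum_map hφ, hS, _root_.map_zero])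
  obtain ⟨PZ, hPZ, hPZparts, hk⟩ := hC _ hZ (by simpa using hj)
  obtain ⟨PB, rfl, rfl⟩ := exists_sum_eq_and_map_map_eq φ hPZ
  refine ⟨PB.map sum, sum_join.symm, fun U hU => ?_, by simpa using hk⟩
  obtain ⟨Q, hQ, rfl⟩ := mem_map.1 hU
  have hQP : ∀ T ∈ Q, T ∈ PB.sum := fun T hT => mem_of_le (le_sum_of_mem hQ) hT
  obtain ⟨hQ0, hQsum⟩ := hPZparts _ (mem_map_of_mem _ hQ)
  refine ⟨fun h0 => ?_, ?_⟩
  · obtain ⟨T, hT⟩ := exists_mem_of_ne_zero (show Q ≠ 0 by rintro rfl; simp at hQ0)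
    exact (hP T (hQP T hT)).1 (sum_eq_zero_iff.1 h0 T hT)
  · rw [AddMonoidHom.id_apply] at hQsum ⊢
    rw [sum_sum_eq_map_sum_map fun T hT => hφ T (hQP T hT), hQsum, _root_.map_zero]

end Kernel

open MvPolynomial in
theorem exists_le_forall_sum_map_eq_zero {p : ℕ} [Fact p.Prime] {α ι : Type*} [Fintype ι]
    (c : ι → α → ZMod p) (S : Multiset α) (hS : Fintype.card ι * (p - 1) < card S) :
    ∃ T ≤ S, T ≠ 0 ∧ ∀ j, (T.map (c j)).sum = 0 := by
  classical
  let F : ι → MvPolynomial S.toEnumFinset (ZMod p) :=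
    fun j => ∑ i : S.toEnumFinset, c j i.1.1 • X i ^ (p - 1)
  have hdeg : ∑ j, (F j).totalDegree < Fintype.card S.toEnumFinset := by
    calc ∑ j, (F j).totalDegree ≤ ∑ _j : ι, (p - 1) := by
          gcongr with j
          exact totalDegree_finsetSum_le fun i _ =>
            (totalDegree_smul_le ..).trans (totalDegree_X_pow ..).le
      _ < Fintype.card S.toEnumFinset := by simpa using hS
  have hdvd := char_dvd_card_solutions_of_fintype_sum_lt (K := ZMod p) p hdeg
  let zero : {x : S.toEnumFinset → ZMod p // ∀ j, eval x (F j) = 0} :=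
    ⟨0, by simp [F, (Fact.out : p.Prime).one_lt, tsub_eq_zero_iff_le]⟩
  obtain ⟨x, hx⟩ := Fintype.exists_ne_of_one_lt_card ((Fact.out : p.Prime).one_lt.trans_le <|
    Nat.le_of_dvd (Fintype.card_pos_iff.2 ⟨zero⟩) hdvd) zero
  -- `T` is the support of `x`, since `y ^ (p - 1) = 1` for `y ≠ 0`
  set t : Finset S.toEnumFinset := {i | x.1 i ≠ 0}
  have hT : t.1.map (fun i => i.1.1) = (t.map (.subtype _)).1.map Prod.fst := by
    simp [Finset.map_val, Multiset.map_map]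
  refine ⟨t.1.map (fun i => i.1.1), ?_, ?_, fun j => ?_⟩
  · rw [hT]
    refine map_fst_le_of_subset_toEnumFinset fun y hy => ?_
    obtain ⟨i, -, rfl⟩ := Finset.mem_map.1 hy
    exact i.2
  · obtain ⟨i, hi⟩ := Function.ne_iff.1 (Subtype.coe_ne_coe.2 hx)
    have hit : i ∈ t := by simpa [t, zero] using hi
    simpa using (Finset.card_pos.2 ⟨i, hit⟩).ne'
  · have := x.2 j
    simp only [F, map_sum, MvPolynomial.smul_eval, eval_pow, eval_X, ZMod.pow_card_sub_one] at this
    rw [Multiset.map_map]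
    change ∑ i ∈ t, c j i.1.1 = 0
    rw [Finset.sum_filter]
    simpa using this

theorem Prod.multiset_sum_eq_zero {M N : Type*} [AddCommMonoid M] [AddCommMonoid N]
    {T : Multiset (M × N)} (h₁ : (T.map Prod.fst).sum = 0) (h₂ : (T.map Prod.snd).sum = 0) :
    T.sum = 0 :=
  Prod.ext (by simpa using (map_multiset_sum (AddMonoidHom.fst M N) T).trans h₁)
    (by simpa using (map_multiset_sum (AddMonoidHom.snd M N) T).trans h₂)

theorem isDavenportBound_prime (p : ℕ) [Fact p.Prime] :
    IsDavenportBound (ZMod p × ZMod p) (2 * p - 1) := by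
  intro S hS
  have := (Fact.out : p.Prime).two_le
  obtain ⟨T, hTS, hT, hsum⟩ :=
    exists_le_forall_sum_map_eq_zero ![Prod.fst, Prod.snd] S (by rw [Fintype.card_fin]; omega)
  exact ⟨T, hTS, hT, Prod.multiset_sum_eq_zero (by simpa using hsum 0) (by simpa using hsum 1)⟩

theorem isEtaBound_prime (p : ℕ) [Fact p.Prime] :
    IsEtaBound (ZMod p × ZMod p) (3 * p - 2) p := by
  intro S hS
  have := (Fact.out : p.Prime).two_le
  obtain ⟨S', hS'S, hS'⟩ := exists_le_card_eq hS
  obtain ⟨T, hTS', hT, hsum⟩ :=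
    exists_le_forall_sum_map_eq_zero ![Prod.fst, Prod.snd, 1] S' (by rw [Fintype.card_fin]; omega)
  have hTsum : T.sum = 0 :=
    Prod.multiset_sum_eq_zero (by simpa using hsum 0) (by simpa using hsum 1)
  by_cases hTp : card T ≤ p
  · exact ⟨T, hTS'.trans hS'S, hT, hTsum, hTp⟩
  -- otherwise `card T = 2p`, and one of the two halves given by `D(C_p²) ≤ 2p - 1` is short
  have h2p : card T = 2 * p := by
    obtain ⟨q, hq⟩ : p ∣ card T := by simpa [ZMod.natCast_eq_zero_iff] using hsum 2
    have hTcard : card T ≤ 3 * p - 2 := hS' ▸ card_le_card hTS'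
    have h1 := Nat.lt_of_mul_lt_mul_left (a := p) (b := 1) (c := q) (by omega)
    have h3 := Nat.lt_of_mul_lt_mul_left (a := p) (b := q) (c := 3) (by omega)
    rw [hq, show q = 2 by omega, mul_comm]
  obtain ⟨U, V, rfl, hU, hV, hUsum, hVsum⟩ :=
    (isDavenportBound_prime p).exists_split hTsum (by omega)
  rw [card_add] at h2p
  rcases le_or_gt (card U) p with hUp | hUp
  · exact ⟨U, (le_add_right U V).trans (hTS'.trans hS'S), hU, hUsum, hUp⟩
  · exact ⟨V, (le_add_left V U).trans (hTS'.trans hS'S), hV, hVsum, by omega⟩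

namespace ZMod

def mulLeftHom (a b : ℕ) : ZMod b →+ ZMod (a * b) :=
  ZMod.lift b ⟨zmultiplesHom _ (a : ZMod (a * b)), by
    simp [mul_comm (b : ZMod (a * b)), ← Nat.cast_mul]⟩

theorem mulLeftHom_intCast (a b : ℕ) (z : ℤ) :
    mulLeftHom a b z = ((a * z : ℤ) : ZMod (a * b)) := by
  simp [mulLeftHom, mul_comm]

theorem ker_castHom_le_range_mulLeftHom (a b : ℕ) :
    (castHom (dvd_mul_right a b) (ZMod a)).toAddMonoidHom.ker ≤ (mulLeftHom a b).range := by
  intro y hy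
  obtain ⟨z, rfl⟩ := ZMod.intCast_surjective y
  obtain ⟨q, rfl⟩ : (a : ℤ) ∣ z := by
    simpa [AddMonoidHom.mem_ker, ZMod.intCast_zmod_eq_zero_iff_dvd] using hy
  exact ⟨q, mulLeftHom_intCast a b q⟩

theorem mulLeftHom_injective {a : ℕ} (ha : a ≠ 0) (b : ℕ) : Injective (mulLeftHom a b) := by
  refine (injective_iff_map_eq_zero _).2 fun x hx => ?_
  obtain ⟨z, rfl⟩ := ZMod.intCast_surjective x
  rw [mulLeftHom_intCast, ZMod.intCast_zmod_eq_zero_iff_dvd, Nat.cast_mul] at hx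
  rw [ZMod.intCast_zmod_eq_zero_iff_dvd]
  exact (mul_dvd_mul_iff_left (by exact_mod_cast ha)).1 hx

theorem ker_castHom_prodMap_le_range (a b : ℕ) :
    let f := (castHom (dvd_mul_right a b) (ZMod a)).toAddMonoidHom
    (f.prodMap f).ker ≤ ((mulLeftHom a b).prodMap (mulLeftHom a b)).range := by
  intro f
  rw [AddMonoidHom.ker_prodMap, AddMonoidHom.range_prodMap]
  exact AddSubgroup.prod_mono (ker_castHom_le_range_mulLeftHom a b)
    (ker_castHom_le_range_mulLeftHom a b)

end ZMod

theorem isEtaBound_zmod_prod {n : ℕ} (hn : 0 < n) :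
    IsEtaBound (ZMod n × ZMod n) (3 * n - 2) n := by
  induction n using Nat.recOnMul with
  | zero => omega
  | one => simpa using isEtaBound_card (A := ZMod 1 × ZMod 1)
  | prime p hp =>
    have := Fact.mk hp
    exact isEtaBound_prime p
  | mul a b iha ihb =>
    have ha := Nat.pos_of_mul_pos_right hn
    have hb := Nat.pos_of_mul_pos_left hn
    convert (iha ha).of_ker (ZMod.ker_castHom_prodMap_le_range a b) (ihb hb) using 1
    obtain ⟨b, rfl⟩ : ∃ b', b = b' + 1 := ⟨b - 1, by omega⟩
    rw [show 3 * (b + 1) - 2 - 1 = 3 * b by omega, show a * (3 * b) = 3 * (a * b) by ring,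
      mul_add a b 1, mul_one]
    omega

theorem isDavenportBound_zmod_prod {n : ℕ} (hn : 0 < n) :
    IsDavenportBound (ZMod n × ZMod n) (2 * n - 1) := by
  induction n using Nat.recOnMul with
  | zero => omega
  | one => simpa using (isEtaBound_card (A := ZMod 1 × ZMod 1)).isDavenportBound
  | prime p hp =>
    have := Fact.mk hp
    exact isDavenportBound_prime p
  | mul a b iha ihb =>
    have ha := Nat.pos_of_mul_pos_right hn
    have hb := Nat.pos_of_mul_pos_left hn
    convert IsDavenportBound.of_ker (ZMod.ker_castHom_prodMap_le_range a b)
      (isEtaBound_zmod_prod ha) (iha ha) (by omega) (ihb hb) using 1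
    obtain ⟨b, rfl⟩ : ∃ b', b = b' + 1 := ⟨b - 1, by omega⟩
    rw [show 2 * (b + 1) - 1 - 1 = 2 * b by omega, show a * (2 * b) = 2 * (a * b) by ring,
      mul_add a b 1, mul_one]
    omega

theorem splitsOver_zmod_prod_self {n j : ℕ} (hn : 0 < n) {S : Multiset (ZMod n × ZMod n)}
    (hS : S.sum = 0) (hcard : j * n + n ≤ card S) : SplitsOver (.id _) (j + 1) S :=
  (isEtaBound_zmod_prod hn).splitsOver
    (fun _ hR hRc => (isDavenportBound_zmod_prod hn).exists_splitsOver hR hRc) hS (by omega)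

theorem splitsOver_zmod_prod {n t k : ℕ} (hn : 0 < n) (ht : 0 < t)
    {S : Multiset (ZMod n × ZMod (n * t))} (hS : S.sum = 0) (hcard : k * (n * t) + n ≤ card S) :
    SplitsOver (.id _) (k + 1) S := by
  have : NeZero t := ⟨ht.ne'⟩
  let π := (AddMonoidHom.id (ZMod n)).prodMap
    (ZMod.castHom (dvd_mul_right n t) (ZMod n)).toAddMonoidHom
  let g := (AddMonoidHom.inr (ZMod n) (ZMod (n * t))).comp (ZMod.mulLeftHom n t)
  have hker : π.ker ≤ g.range := by
    rintro ⟨y₁, y₂⟩ hy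
    obtain ⟨rfl, hy₂⟩ := Prod.ext_iff.1 (AddMonoidHom.mem_ker.1 hy)
    obtain ⟨c, rfl⟩ := ZMod.ker_castHom_le_range_mulLeftHom n t hy₂
    exact ⟨c, rfl⟩
  have hg : Injective g :=
    (Prod.mk_right_injective 0).comp (ZMod.mulLeftHom_injective hn.ne' t)
  have hπS : SplitsOver (.id _) (k * t + 1) (S.map π) :=
    splitsOver_zmod_prod_self hn (by rw [← map_multiset_sum, hS, _root_.map_zero])
      (by rw [card_map]; nlinarith)
  exact hπS.of_map.of_ker hg hker
    (fun Z hZ hZc => splitsOver_of_mul_card_lt hZ (by rw [ZMod.card]; omega)) hS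

def extremalSeq (n m k : ℕ) : Multiset (ZMod n × ZMod m) :=
  replicate (n - 1) (1, 0) + replicate (k * m - 1) (0, 1) + {(1, 1)}

section ExtremalSeq

variable {n m k : ℕ}

theorem card_extremalSeq (hn : 0 < n) (hkm : 0 < k * m) :
    card (extremalSeq n m k) = k * m + n - 1 := by
  simp only [extremalSeq, card_add, card_replicate, card_singleton]
  omega

theorem sum_extremalSeq (hn : 0 < n) (hkm : 0 < k * m) : (extremalSeq n m k).sum = 0 := by
  simp only [extremalSeq, sum_add, sum_replicate, sum_singleton, Prod.ext_iff]
  refine ⟨?_, ?_⟩ <;> simp only [Prod.smul_mk, nsmul_eq_mul, mul_one, mul_zero, Prod.fst_add,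
    Prod.snd_add, Prod.fst_zero, Prod.snd_zero, add_zero, zero_add] <;>
    rw [← Nat.cast_add_one, Nat.sub_add_cancel (by assumption), ZMod.natCast_eq_zero_iff]
  exact dvd_mul_left m k

variable [Fact (1 < m)]

theorem sum_map_val_snd_extremalSeq (hkm : 0 < k * m) :
    ((extremalSeq n m k).map fun x => x.2.val).sum = k * m := by
  simp only [extremalSeq, map_add, map_replicate, map_singleton, sum_add, sum_replicate,
    sum_singleton, ZMod.val_zero, ZMod.val_one, smul_eq_mul]
  omega

theorem le_sum_map_val_snd_of_le_extremalSeq {T : Multiset (ZMod n × ZMod m)}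
    (hTS : T ≤ extremalSeq n m k) (hT : T ≠ 0) (hTsum : T.sum = 0) :
    m ≤ (T.map fun x => x.2.val).sum := by
  have h10 : (1 : ZMod m) ≠ 0 := one_ne_zero
  have hdvd : m ∣ (T.map fun x => x.2.val).sum := by
    rw [← ZMod.natCast_eq_zero_iff, Nat.cast_multiset_sum, Multiset.map_map]
    simpa [Function.comp_def] using
      (map_multiset_sum (AddMonoidHom.snd _ _) T).symm.trans (congrArg Prod.snd hTsum)
  refine Nat.le_of_dvd (Nat.pos_of_ne_zero fun h0 => ?_) hdvd
  -- a part without terms of second coordinate `1` consists of fewer than `n` copies of `(1, 0)`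
  have hT₁ : ∀ x ∈ T, x = (1, 0) := by
    intro x hx
    have hx0 : x.2 = 0 := (ZMod.val_eq_zero _).1 (sum_eq_zero_iff.1 h0 _ (mem_map_of_mem _ hx))
    have hxS := mem_of_le hTS hx
    simp only [extremalSeq, mem_add, mem_singleton] at hxS
    rcases hxS with (h | h) | rfl
    · exact eq_of_mem_replicate h
    · rw [eq_of_mem_replicate h] at hx0
      exact absurd hx0 h10
    · exact absurd hx0 h10
  rw [eq_replicate_card.2 hT₁] at hTS hTsum
  have hcard : card T ≤ n - 1 := by
    simpa [extremalSeq, count_replicate, h10.symm] using le_count_iff_replicate_le.2 hTS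
  have hdvd' : n ∣ card T := by
    simpa [ZMod.natCast_eq_zero_iff] using congrArg Prod.fst hTsum
  have := card_pos.2 hT
  exact hT (card_eq_zero.1 (Nat.eq_zero_of_dvd_of_lt hdvd' (by omega)))

theorem not_splitsOver_extremalSeq (hkm : 0 < k * m) :
    ¬ SplitsOver (.id _) (k + 1) (extremalSeq n m k) := by
  rintro ⟨P, hPS, hP, hkP⟩
  let w : Multiset (ZMod n × ZMod m) → ℕ := fun T => (T.map fun x => x.2.val).sum
  have : (k + 1) * m ≤ k * m :=
    calc (k + 1) * m ≤ card (P.map w) • m := by simpa using Nat.mul_le_mul_right m hkP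
      _ ≤ (P.map w).sum := card_nsmul_le_sum fun x hx => by
          obtain ⟨T, hT, rfl⟩ := mem_map.1 hx
          exact le_sum_map_val_snd_of_le_extremalSeq (hPS ▸ le_sum_of_mem hT) (hP T hT).1
            (hP T hT).2
      _ = w P.sum := by
          simp only [w]
          rw [show P.sum.map _ = (P.map (map _)).join from map_join _ P, sum_join, map_map]
          rfl
      _ = k * m := hPS ▸ sum_map_val_snd_extremalSeq hkm
  nlinarith

end ExtremalSeq

theorem davK_eq_of_bounds {A : Type*} [AddCommGroup A] {k L : ℕ}
    (hlow : ∃ S : Multiset A, S.sum = 0 ∧ card S = L ∧ ¬ SplitsOver (.id A) (k + 1) S)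
    (hup : ∀ S : Multiset A, S.sum = 0 → L < card S → SplitsOver (.id A) (k + 1) S) :
    DavK A k = L := by
  refine IsGreatest.csSup_eq ⟨?_, ?_⟩
  · obtain ⟨S, hS, rfl, hSk⟩ := hlow
    exact ⟨S, hS, rfl, not_splitsOver_id_iff.1 hSk⟩
  · rintro _ ⟨S, hS, rfl, hSk⟩
    by_contra! h
    exact not_splitsOver_id_iff.2 hSk (hup S hS h)

theorem stmt3_general (n m k : ℕ) (hm : 0 < m) (hk : 1 ≤ k) (hnm : n ∣ m) :
    DavK (ZMod n × ZMod m) k = k * m + n - 1 := by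
  have hn : 0 < n := Nat.pos_of_dvd_of_pos hnm hm
  have hkm : 0 < k * m := Nat.mul_pos hk hm
  refine davK_eq_of_bounds ?_ fun S hS hcard => ?_
  · rcases (Nat.succ_le_of_lt hm).eq_or_lt with rfl | hm1
    · -- the group is trivial and `extremalSeq` degenerates
      obtain rfl := Nat.dvd_one.1 hnm
      exact ⟨replicate k 0, by simp, by simp, fun h => by simpa using h.le_card⟩
    · have : Fact (1 < m) := ⟨hm1⟩
      exact ⟨extremalSeq n m k, sum_extremalSeq hn hkm, card_extremalSeq hn hkm,
        not_splitsOver_extremalSeq hkm⟩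
  · obtain ⟨t, rfl⟩ := hnm
    exact splitsOver_zmod_prod hn (Nat.pos_of_mul_pos_left hm) hS (by omega)

/-- Halter-Koch: for `n ∣ m`, `D_k(ℤ/n × ℤ/m) = k·m + n − 1`. -/
theorem stmt3 (n m k : ℕ) (hn : 0 < n) (hm : 0 < m) (hk : 1 ≤ k) (hnm : n ∣ m) :
    DavK (ZMod n × ZMod m) k = k * m + n - 1 :=
  stmt3_general n m k hm hk hnm
end

section
/- The generalized Davenport constant of the elementary abelian group (Z/2Z)^3 equals 4 when k = 1, and equals 2k + 3 when k > 1. -/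
namespace DavAux

abbrev G := ZMod 2 × ZMod 2 × ZMod 2

attribute [local instance] Multiset.decidableExistsMultiset

def e1 : G := (1, 0, 0)

def S0 : Multiset G := {(1,0,0), (0,1,0), (0,0,1), (1,1,1)}

def R : Multiset G := {(0,1,0), (0,0,1), (1,1,0), (1,0,1), (0,1,1), (1,1,1)}

lemma self_add : ∀ a : G, a + a = 0 := by decide

lemma sum2 : ∀ x y : G, x + y = 0 → y = x := by decide

lemma dep4 : ∀ a b c d : G,
    ∃ T ∈ ({a, b, c, d} : Multiset G).powerset, T ≠ 0 ∧ T.sum = 0 := by decide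

lemma s0sum : S0.sum = 0 := by decide
lemma s0card : Multiset.card S0 = 4 := by decide
lemma s0min : ∀ T ∈ S0.powerset, T ≠ 0 → T.sum = 0 → 4 ≤ Multiset.card T := by decide
lemma Rsum : R.sum = e1 := by decide
lemma Rcard : Multiset.card R = 6 := by decide
lemma Rcount : ∀ x : G, Multiset.count x R ≤ 1 := by decide
lemma Rzero : (0:G) ∉ R := by decide
lemma e1count : Multiset.count e1 R = 0 := by decide
lemma e1ne : e1 ≠ 0 := by decide
lemma erase_card : (Finset.univ.erase (0:G)).card = 7 := by decide

lemma card_sum' {α : Type*} (P : Multiset (Multiset α)) :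
    Multiset.card P.sum = (P.map Multiset.card).sum := by
  induction P using Multiset.induction_on with
  | empty => simp
  | cons a s ih => simp [ih]

lemma count_sum' {α : Type*} [DecidableEq α] (a : α) (P : Multiset (Multiset α)) :
    Multiset.count a P.sum = (P.map (Multiset.count a)).sum := by
  induction P using Multiset.induction_on with
  | empty => simp
  | cons b s ih => simp [ih]

/-- Any multiset of 5 elements over `G` has a small nonempty zero-sum submultiset. -/
lemma lemA (S : Multiset G) (h5 : 5 ≤ Multiset.card S) :
    ∃ T, T ≤ S ∧ T ≠ 0 ∧ T.sum = 0 ∧ Multiset.card T ≤ 4 := by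
  obtain ⟨a, ha⟩ := Multiset.card_pos_iff_exists_mem.1 (show 0 < Multiset.card S by omega)
  obtain ⟨S1, rfl⟩ := Multiset.exists_cons_of_mem ha
  rw [Multiset.card_cons] at h5
  obtain ⟨b, hb⟩ := Multiset.card_pos_iff_exists_mem.1 (show 0 < Multiset.card S1 by omega)
  obtain ⟨S2, rfl⟩ := Multiset.exists_cons_of_mem hb
  rw [Multiset.card_cons] at h5
  obtain ⟨c, hc⟩ := Multiset.card_pos_iff_exists_mem.1 (show 0 < Multiset.card S2 by omega)
  obtain ⟨S3, rfl⟩ := Multiset.exists_cons_of_mem hc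
  rw [Multiset.card_cons] at h5
  obtain ⟨d, hd⟩ := Multiset.card_pos_iff_exists_mem.1 (show 0 < Multiset.card S3 by omega)
  obtain ⟨S4, rfl⟩ := Multiset.exists_cons_of_mem hd
  obtain ⟨T, hT, hT0, hTs⟩ := dep4 a b c d
  have hle : T ≤ ({a, b, c, d} : Multiset G) := Multiset.mem_powerset.1 hT
  have key : ({a, b, c, d} : Multiset G) + S4 = a ::ₘ b ::ₘ c ::ₘ d ::ₘ S4 := by
    simp [Multiset.insert_eq_cons, Multiset.cons_add, Multiset.singleton_add]
  have hcard : Multiset.card T ≤ 4 := by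
    have := Multiset.card_le_card hle
    simpa using this
  exact ⟨T, by rw [← key]; exact le_trans hle (Multiset.le_add_right _ _), hT0, hTs, hcard⟩

/-- Any zero-sum multiset of at least 5 elements splits into two nonempty zero-sum parts. -/
lemma lemA2 (S : Multiset G) (hs : S.sum = 0) (h5 : 5 ≤ Multiset.card S) :
    ∃ P : Multiset (Multiset G), P.sum = S ∧ (∀ T ∈ P, T ≠ 0 ∧ T.sum = 0) ∧
      Multiset.card P = 2 := by
  obtain ⟨T, hTS, hT0, hTs, hT4⟩ := lemA S h5
  have hsub : (S - T).sum = 0 := by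
    have h := Multiset.sum_add T (S - T)
    rw [add_tsub_cancel_of_le hTS, hs, hTs, zero_add] at h
    exact h.symm
  have hsub0 : S - T ≠ 0 := by
    intro h
    have := congrArg Multiset.card h
    rw [Multiset.card_sub hTS] at this
    simp at this
    omega
  refine ⟨T ::ₘ {S - T}, ?_, ?_, by simp⟩
  · rw [Multiset.sum_cons, Multiset.sum_singleton, add_tsub_cancel_of_le hTS]
  · intro T' hT'
    rcases Multiset.mem_cons.1 hT' with rfl | h
    · exact ⟨hT0, hTs⟩
    · rw [Multiset.mem_singleton] at h
      subst h
      exact ⟨hsub0, hsub⟩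

/-- Any multiset of 8 elements over `G` has a nonempty zero-sum submultiset of size ≤ 2. -/
lemma pairLemma (S : Multiset G) (h8 : 8 ≤ Multiset.card S) :
    ∃ T, T ≤ S ∧ T ≠ 0 ∧ T.sum = 0 ∧ Multiset.card T ≤ 2 := by
  by_cases h0 : (0 : G) ∈ S
  · exact ⟨{0}, Multiset.singleton_le.2 h0, by simp, by simp, by simp⟩
  by_cases hnd : S.Nodup
  · exfalso
    have hsub : S.toFinset ⊆ Finset.univ.erase 0 := by
      intro x hx
      rw [Multiset.mem_toFinset] at hx
      exact Finset.mem_erase.2 ⟨fun h => h0 (h ▸ hx), Finset.mem_univ x⟩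
    have h1 : S.toFinset.card = Multiset.card S := Multiset.toFinset_card_eq_card_iff_nodup.2 hnd
    have h2 := Finset.card_le_card hsub
    rw [h1, erase_card] at h2
    omega
  · rw [Multiset.nodup_iff_count_le_one] at hnd
    push_neg at hnd
    obtain ⟨a, ha⟩ := hnd
    refine ⟨Multiset.replicate 2 a, Multiset.le_count_iff_replicate_le.1 (by omega), ?_, ?_, by simp⟩
    · intro h
      simpa using congrArg Multiset.card h
    · rw [Multiset.sum_replicate, two_nsmul]
      exact self_add a

/-- Any zero-sum multiset of at least `2k+4` elements splits into at least `k+1`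
nonempty zero-sum parts. -/
lemma lemB : ∀ k, 1 ≤ k → ∀ S : Multiset G, S.sum = 0 → 2 * k + 4 ≤ Multiset.card S →
    ∃ P : Multiset (Multiset G), P.sum = S ∧ (∀ T ∈ P, T ≠ 0 ∧ T.sum = 0) ∧
      k + 1 ≤ Multiset.card P := by
  intro k hk
  induction k, hk using Nat.le_induction with
  | base =>
    intro S hs hc
    obtain ⟨P, h1, h2, h3⟩ := lemA2 S hs (by omega)
    exact ⟨P, h1, h2, by omega⟩
  | succ k hk ih =>
    intro S hs hc
    obtain ⟨T, hTS, hT0, hTsum, hT2⟩ := pairLemma S (by omega)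
    have hsub : (S - T).sum = 0 := by
      have h := Multiset.sum_add T (S - T)
      rw [add_tsub_cancel_of_le hTS, hs, hTsum, zero_add] at h
      exact h.symm
    have hc' : 2 * k + 4 ≤ Multiset.card (S - T) := by
      rw [Multiset.card_sub hTS]
      have := Multiset.card_le_card hTS
      omega
    obtain ⟨P, hP, hPg, hPc⟩ := ih (S - T) hsub hc'
    refine ⟨T ::ₘ P, ?_, ?_, ?_⟩
    · rw [Multiset.sum_cons, hP, add_tsub_cancel_of_le hTS]
    · intro T' hT'
      rcases Multiset.mem_cons.1 hT' with rfl | h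
      · exact ⟨hT0, hTsum⟩
      · exact hPg _ h
    · rw [Multiset.card_cons]; omega

/-- `S0` admits no factorization into more than one nonempty zero-sum part. -/
lemma bound1 : ∀ P : Multiset (Multiset G), P.sum = S0 →
    (∀ T ∈ P, T ≠ 0 ∧ Multiset.sum T = 0) → Multiset.card P ≤ 1 := by
  intro P hP hparts
  have hcards : ∀ x ∈ P.map Multiset.card, 4 ≤ x := by
    intro x hx
    obtain ⟨T, hT, rfl⟩ := Multiset.mem_map.1 hx
    have hle : T ≤ S0 := hP ▸ Multiset.single_le_sum (fun y _ => Multiset.zero_le y) T hT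
    exact s0min T (Multiset.mem_powerset.2 hle) (hparts T hT).1 (hparts T hT).2
  have h1 : Multiset.card P • 4 ≤ (P.map Multiset.card).sum := by
    have := Multiset.card_nsmul_le_sum hcards
    simpa using this
  have h2 : (P.map Multiset.card).sum = 4 := by
    rw [← card_sum', hP, s0card]
  rw [h2, smul_eq_mul] at h1
  omega

section K

variable (k : ℕ)

/-- The extremal sequence for `k ≥ 2`. -/
def Sk : Multiset G := Multiset.replicate (2 * k - 3) e1 + R

variable {k}

lemma Sk_card (hk : 2 ≤ k) : Multiset.card (Sk k) = 2 * k + 3 := by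
  rw [Sk, Multiset.card_add, Multiset.card_replicate, Rcard]
  omega

lemma Sk_sum (hk : 2 ≤ k) : (Sk k).sum = 0 := by
  rw [Sk, Multiset.sum_add, Multiset.sum_replicate, Rsum]
  have h23 : 2 * k - 3 = 2 * (k - 2) + 1 := by omega
  rw [h23, add_nsmul, mul_nsmul, two_nsmul, self_add, smul_zero, zero_add, one_nsmul, self_add]

lemma Sk_count_e1 : Multiset.count e1 (Sk k) = 2 * k - 3 := by
  rw [Sk, Multiset.count_add, Multiset.count_replicate, e1count]
  simp

lemma Sk_count_ne {x : G} (hx : x ≠ e1) : Multiset.count x (Sk k) ≤ 1 := by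
  rw [Sk, Multiset.count_add, Multiset.count_replicate, if_neg (fun h => hx h.symm)]
  simpa using Rcount x

lemma Sk_zero : (0 : G) ∉ Sk k := by
  rw [Sk, Multiset.mem_add]
  rintro (h | h)
  · exact e1ne (Multiset.eq_of_mem_replicate h).symm
  · exact Rzero h

/-- `Sk k` admits no factorization into more than `k` nonempty zero-sum parts. -/
lemma boundK (hk : 2 ≤ k) : ∀ P : Multiset (Multiset G), P.sum = Sk k →
    (∀ T ∈ P, T ≠ 0 ∧ Multiset.sum T = 0) → Multiset.card P ≤ k := by
  intro P hP hparts
  have hTle : ∀ T ∈ P, T ≤ Sk k :=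
    fun T hT => hP ▸ Multiset.single_le_sum (fun y _ => Multiset.zero_le y) T hT
  -- every part has at least 2 elements
  have h2le : ∀ T ∈ P, 2 ≤ Multiset.card T := by
    intro T hT
    obtain ⟨hT0, hTs⟩ := hparts T hT
    by_contra h
    push_neg at h
    have hpos : 0 < Multiset.card T := Multiset.card_pos.2 hT0
    have hc1 : Multiset.card T = 1 := by omega
    obtain ⟨x, rfl⟩ := Multiset.card_eq_one.1 hc1
    rw [Multiset.sum_singleton] at hTs
    subst hTs
    exact Sk_zero (Multiset.mem_of_le (hTle _ hT) (Multiset.mem_singleton_self _))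
  -- parts of size 2 are {e1, e1}
  have h2eq : ∀ T ∈ P, Multiset.card T = 2 → Multiset.count e1 T = 2 := by
    intro T hT hc2
    obtain ⟨x, y, rfl⟩ := Multiset.card_eq_two.1 hc2
    have hsum : x + y = 0 := by
      have := (hparts _ hT).2
      simpa [Multiset.insert_eq_cons] using this
    have hyx : y = x := sum2 x y hsum
    subst hyx
    have hcx : Multiset.count y ({y, y} : Multiset G) = 2 := by
      simp [Multiset.insert_eq_cons]
    have hxe : y = e1 := by
      by_contra hne
      have := Multiset.count_le_of_le y (hTle _ hT)
      rw [hcx] at this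
      have := Sk_count_ne (k := k) hne
      omega
    subst hxe
    exact hcx
  classical
  set P2 := P.filter (fun T => Multiset.card T = 2) with hP2
  set P3 := P.filter (fun T => ¬ Multiset.card T = 2) with hP3
  have hsplit : P2 + P3 = P := Multiset.filter_add_not _ P
  set t := Multiset.card P2 with ht
  set t3 := Multiset.card P3 with ht3
  have hm : t + t3 = Multiset.card P := by
    rw [ht, ht3, ← Multiset.card_add, hsplit]
  -- count e1 bound : 2 * t ≤ 2 * k - 3
  have hrep : P2.map (Multiset.count e1) = Multiset.replicate t 2 := by
    rw [Multiset.eq_replicate]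
    constructor
    · simp [ht]
    · intro b hb
      obtain ⟨T, hT, rfl⟩ := Multiset.mem_map.1 hb
      exact h2eq T (Multiset.mem_filter.1 hT).1 (Multiset.mem_filter.1 hT).2
  have hcount : t * 2 ≤ 2 * k - 3 := by
    have h := count_sum' e1 P
    rw [hP, Sk_count_e1, ← hsplit, Multiset.map_add, Multiset.sum_add, hrep,
      Multiset.sum_replicate, smul_eq_mul] at h
    omega
  -- card bound
  have hrep2 : P2.map Multiset.card = Multiset.replicate t 2 := by
    rw [Multiset.eq_replicate]
    constructor
    · simp [ht]
    · intro b hb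
      obtain ⟨T, hT, rfl⟩ := Multiset.mem_map.1 hb
      exact (Multiset.mem_filter.1 hT).2
  have h3le : ∀ x ∈ P3.map Multiset.card, 3 ≤ x := by
    intro x hx
    obtain ⟨T, hT, rfl⟩ := Multiset.mem_map.1 hx
    have h1 := h2le T (Multiset.mem_filter.1 hT).1
    have h2 := (Multiset.mem_filter.1 hT).2
    omega
  have h3sum : t3 * 3 ≤ (P3.map Multiset.card).sum := by
    have := Multiset.card_nsmul_le_sum h3le
    simpa [ht3, mul_comm] using this
  have hcard : (P.map Multiset.card).sum = 2 * k + 3 := by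
    rw [← card_sum', hP, Sk_card hk]
  rw [← hsplit, Multiset.map_add, Multiset.sum_add, hrep2, Multiset.sum_replicate,
    smul_eq_mul] at hcard
  omega

end K

lemma mem_set_K1 : (4 : ℕ) ∈ {n : ℕ | ∃ S : Multiset G, S.sum = 0 ∧ Multiset.card S = n ∧
    ∀ P : Multiset (Multiset G), P.sum = S →
      (∀ T ∈ P, T ≠ 0 ∧ Multiset.sum T = 0) → Multiset.card P ≤ 1} :=
  ⟨S0, s0sum, s0card, bound1⟩

end DavAux

/-- Delorme–Ordaz–Quiroz: `D_k((ℤ/2)³) = 4` for `k = 1` and `2k + 3` for `k > 1`. -/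
theorem stmt4 :
    DavK (ZMod 2 × ZMod 2 × ZMod 2) 1 = 4 ∧
    ∀ k : ℕ, 1 < k → DavK (ZMod 2 × ZMod 2 × ZMod 2) k = 2 * k + 3 := by
  constructor
  · rw [DavK]
    apply IsGreatest.csSup_eq
    constructor
    · exact DavAux.mem_set_K1
    · rintro n ⟨S, hs, rfl, hbound⟩
      by_contra h
      push_neg at h
      obtain ⟨P, hP, hPg, hPc⟩ := DavAux.lemA2 S hs (by omega)
      have := hbound P hP hPg
      omega
  · intro k hk
    rw [DavK]
    apply IsGreatest.csSup_eq
    constructor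
    · exact ⟨DavAux.Sk k, DavAux.Sk_sum hk, DavAux.Sk_card hk, DavAux.boundK hk⟩
    · rintro n ⟨S, hs, rfl, hbound⟩
      by_contra h
      push_neg at h
      obtain ⟨P, hP, hPg, hPc⟩ := DavAux.lemB k (by omega) S hs (by omega)
      have := hbound P hP hPg
      omega
end

section
/- Let A be an abelian group with subgroup B. Then for all k ≥ 1, D_k(A) ≤ D_{D_k(A/B)}(B), where D_j denotes the generalized Davenport constant. -/
open Multiset

namespace Multiset

variable {α β : Type*}

theorem map_eq_add_iff {f : α → β} {S : Multiset α} {t u : Multiset β} :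
    S.map f = t + u ↔ ∃ s₁ s₂, S = s₁ + s₂ ∧ s₁.map f = t ∧ s₂.map f = u := by
  classical
  refine ⟨fun h => ?_, by rintro ⟨s₁, s₂, rfl, rfl, rfl⟩; exact map_add f s₁ s₂⟩
  induction t using Multiset.induction_on generalizing S with
  | empty => exact ⟨0, S, (zero_add S).symm, map_zero f, by simpa using h⟩
  | cons b t ih =>
    obtain ⟨a, ha, rfl, herase⟩ := (map_eq_cons f S (t + u) b).2 (by rw [h, cons_add])
    obtain ⟨s₁, s₂, hS, rfl, rfl⟩ := ih herase
    exact ⟨a ::ₘ s₁, s₂, by rw [cons_add, ← hS, cons_erase ha], map_cons f a s₁, rfl⟩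

theorem map_eq_sum_iff {f : α → β} {S : Multiset α} {P : Multiset (Multiset β)} :
    S.map f = P.sum ↔ ∃ Q : Multiset (Multiset α), Q.sum = S ∧ Q.map (map f) = P := by
  refine ⟨fun h => ?_, by rintro ⟨Q, rfl, rfl⟩; exact map_join f Q⟩
  induction P using Multiset.induction_on generalizing S with
  | empty => exact ⟨0, by rw [sum_zero, eq_comm]; simpa using h, map_zero _⟩
  | cons T P ih =>
    obtain ⟨s₁, s₂, rfl, rfl, h₂⟩ := map_eq_add_iff.1 (h.trans (sum_cons T P))
    obtain ⟨Q, rfl, rfl⟩ := ih h₂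
    exact ⟨s₁ ::ₘ Q, sum_cons s₁ Q, map_cons _ s₁ Q⟩

theorem card_le_card_sum {P : Multiset (Multiset α)} (hP : ∀ T ∈ P, T ≠ 0) :
    card P ≤ card P.sum := by
  calc card P = card (P.map card) • 1 := by simp
    _ ≤ (P.map card).sum := card_nsmul_le_sum (by simpa [Nat.one_le_iff_ne_zero] using hP)
    _ = card P.sum := (card_join P).symm

end Multiset

section Blocks

variable {α β : Type*}

def BlocksAtMost (p : Multiset α → Prop) (k : ℕ) (S : Multiset α) : Prop :=
  ∀ P : Multiset (Multiset α), P.sum = S → (∀ T ∈ P, T ≠ 0 ∧ p T) → card P ≤ k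

variable {p q : Multiset α → Prop} {k k' : ℕ} {S : Multiset α}

theorem BlocksAtMost.mono (h : BlocksAtMost p k S) (hk : k ≤ k') (hqp : ∀ T, q T → p T) :
    BlocksAtMost q k' S := fun P hP hblocks =>
  (h P hP fun T hT => ⟨(hblocks T hT).1, hqp T (hblocks T hT).2⟩).trans hk

theorem blocksAtMost_map_iff {p : Multiset β → Prop} (f : α → β) :
    BlocksAtMost p k (S.map f) ↔ BlocksAtMost (fun T => p (T.map f)) k S := by
  constructor
  · intro h Q hQ hblocks
    rw [← card_map (map f)]
    refine h _ (by rw [← hQ]; exact (map_join f Q).symm) ?_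
    simpa using hblocks
  · intro h P hP hblocks
    obtain ⟨Q, rfl, rfl⟩ := map_eq_sum_iff.1 hP.symm
    rw [card_map]
    exact h Q rfl fun T hT => by simpa using hblocks _ (mem_map_of_mem _ hT)

theorem BlocksAtMost.sum_blocks {Q : Multiset (Multiset α)} (h : BlocksAtMost p k Q.sum)
    (hQ : ∀ T ∈ Q, T ≠ 0) : BlocksAtMost (fun U => p U.sum) k Q := by
  intro R hR hblocks
  rw [← card_map sum]
  refine h _ (by rw [← hR]; exact sum_join.symm) fun V hV => ?_
  obtain ⟨U, hU, rfl⟩ := mem_map.1 hV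
  refine ⟨fun h0 => (hblocks U hU).1 ?_, (hblocks U hU).2⟩
  refine eq_zero_of_forall_notMem fun T hT => hQ T ?_ (sum_eq_zero_iff.1 h0 T hT)
  exact hR ▸ mem_join.2 ⟨U, hU, hT⟩

theorem exists_factorization_blocksAtMost_card
    (h : ∃ P : Multiset (Multiset α), P.sum = S ∧ ∀ T ∈ P, T ≠ 0 ∧ p T) :
    ∃ P : Multiset (Multiset α), P.sum = S ∧ (∀ T ∈ P, T ≠ 0 ∧ p T) ∧
      BlocksAtMost p (card P) S := by
  set s := {n | ∃ P : Multiset (Multiset α), P.sum = S ∧ (∀ T ∈ P, T ≠ 0 ∧ p T) ∧ card P = n}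
  have hbdd : BddAbove s := ⟨card S, by
    rintro _ ⟨P, rfl, hblocks, rfl⟩
    exact card_le_card_sum fun T hT => (hblocks T hT).1⟩
  obtain ⟨P, hPS, hblocks, hcard⟩ : sSup s ∈ s :=
    Nat.sSup_mem (let ⟨P, hP⟩ := h; ⟨card P, P, hP.1, hP.2, rfl⟩) hbdd
  exact ⟨P, hPS, hblocks, fun P' hP' hblocks' => hcard ▸ le_csSup hbdd ⟨P', hP', hblocks', rfl⟩⟩

end Blocks

section DavK

variable {G H : Type*} [AddCommGroup G] [AddCommGroup H] {k : ℕ} {S : Multiset G}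

theorem count_le_of_blocksAtMost [DecidableEq G] (hS0 : S.sum = 0)
    (hS : BlocksAtMost (·.sum = 0) k S) {g : G} (hg : IsOfFinAddOrder g) :
    count g S ≤ k * addOrderOf g := by
  by_contra! hlt
  set T := replicate (k * addOrderOf g) g
  have hTS : T ≤ S := le_count_iff_replicate_le.1 hlt.le
  have hT0 : T.sum = 0 := by
    rw [sum_replicate, mul_comm, mul_nsmul, addOrderOf_nsmul_eq_zero, nsmul_zero]
  refine (hS ((S - T) ::ₘ replicate k (replicate (addOrderOf g) g)) ?_ ?_).not_gt (by simp)
  · rw [sum_cons, sum_replicate, nsmul_replicate, tsub_add_cancel_of_le hTS]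
  · intro U hU
    rcases mem_cons.1 hU with rfl | hU
    · have hg_mem : g ∈ S - T := count_pos.1 (by rw [count_sub, count_replicate_self]; omega)
      refine ⟨ne_of_mem_of_not_mem' hg_mem (notMem_zero g), ?_⟩
      show (S - T).sum = 0
      have := congrArg sum (tsub_add_cancel_of_le hTS)
      rwa [sum_add, hT0, add_zero, hS0] at this
    · obtain rfl := eq_of_mem_replicate hU
      exact ⟨ne_of_mem_of_not_mem' (mem_replicate.2 ⟨hg.addOrderOf_pos.ne', rfl⟩) (notMem_zero g),
        by simp⟩

theorem card_le_of_blocksAtMost [Finite G] (hS0 : S.sum = 0)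
    (hS : BlocksAtMost (·.sum = 0) k S) : card S ≤ k * Nat.card G * Nat.card G := by
  classical
  have := Fintype.ofFinite G
  calc card S ≤ card ((k * Nat.card G) • (Finset.univ : Finset G).val) :=
        card_le_card <| le_iff_count.2 fun g => by
          rw [count_nsmul, count_univ, mul_one]
          exact (count_le_of_blocksAtMost hS0 hS (isOfFinAddOrder_of_finite g)).trans
            (Nat.mul_le_mul_left k (addOrderOf_le_card (x := g)))
    _ = k * Nat.card G * Nat.card G := by simp [Nat.card_eq_fintype_card]

theorem le_davK [Finite G] (hS0 : S.sum = 0) (hS : BlocksAtMost (·.sum = 0) k S) :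
    card S ≤ DavK G k :=
  le_csSup ⟨k * Nat.card G * Nat.card G, by
    rintro _ ⟨S, hS0, rfl, hS⟩
    exact card_le_of_blocksAtMost hS0 hS⟩ ⟨S, hS0, rfl, hS⟩

theorem davK_le {c : ℕ}
    (h : ∀ S : Multiset G, S.sum = 0 → BlocksAtMost (·.sum = 0) k S → card S ≤ c) :
    DavK G k ≤ c :=
  csSup_le' <| by
    rintro _ ⟨S, hS0, rfl, hS⟩
    exact h S hS0 hS

theorem davK_mono [Finite G] {k' : ℕ} (hk : k ≤ k') : DavK G k ≤ DavK G k' :=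
  davK_le fun _ hS0 hS => le_davK hS0 (hS.mono hk fun _ => id)

theorem davK_le_davK_of_injective [Finite H] {f : G →+ H} (hf : Function.Injective f) :
    DavK G k ≤ DavK H k :=
  davK_le fun S hS0 hS => card_map f S ▸
    le_davK (by rw [← map_multiset_sum, hS0, _root_.map_zero])
      ((blocksAtMost_map_iff f).2 (hS.mono le_rfl fun T hT => hf (by
        rw [map_multiset_sum, hT, _root_.map_zero])))

theorem BlocksAtMost.of_map (f : G →+ H) (h : BlocksAtMost (·.sum = 0) k (S.map f)) :
    BlocksAtMost (·.sum = 0) k S :=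
  ((blocksAtMost_map_iff f).1 h).mono le_rfl fun T hT => by
    rw [← map_multiset_sum, hT, _root_.map_zero]

theorem davK_le_davK_davK_ker [Finite G] [Finite H] (f : G →+ H) (k : ℕ) :
    DavK G k ≤ DavK H (DavK f.ker k) := by
  refine davK_le fun S hS0 hS => ?_
  rcases eq_or_ne S 0 with rfl | hne
  · simp
  obtain ⟨Q, rfl, hQ, hmax⟩ := exists_factorization_blocksAtMost_card (p := fun T => f T.sum = 0)
    ⟨{S}, sum_singleton _, by simp [hne, hS0]⟩
  have hker : ∀ x ∈ Q.map sum, x ∈ f.ker := by simpa using fun T hT => (hQ T hT).2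
  lift Q.map sum to Multiset f.ker using hker with C hC
  have hC0 : C.sum = 0 := by
    refine f.ker.subtype_injective ?_
    rw [map_multiset_sum, AddSubgroup.coe_subtype, hC, ← sum_join]
    exact hS0
  have hCk : BlocksAtMost (·.sum = 0) k C := by
    refine BlocksAtMost.of_map f.ker.subtype ?_
    rw [AddSubgroup.coe_subtype, hC, blocksAtMost_map_iff]
    exact (hS.sum_blocks fun T hT => (hQ T hT).1).mono le_rfl fun T hT => by
      rwa [← sum_join] at hT
  calc card Q.sum = card (Q.sum.map f) := (card_map f _).symm
    _ ≤ DavK H (card Q) := le_davK (by rw [← map_multiset_sum, hS0, _root_.map_zero])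
        ((blocksAtMost_map_iff f).2 (hmax.mono le_rfl fun T hT => by rwa [map_multiset_sum]))
    _ = DavK H (card C) := by rw [← card_map Subtype.val C, hC, card_map]
    _ ≤ DavK H (DavK f.ker k) := davK_mono (le_davK hC0 hCk)

end DavK

open MonoidHom in
theorem CommGroup.exists_monoidHom_ker_mulEquiv_quotient {G : Type*} [CommGroup G] [Finite G]
    (H : Subgroup G) : ∃ φ : G →* H, Nonempty (φ.ker ≃* G ⧸ H) := by
  have : NeZero (Monoid.exponent G) := ⟨Monoid.exponent_ne_zero_of_finite⟩
  have : NeZero (Monoid.exponent H) := ⟨Monoid.exponent_ne_zero_of_finite⟩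
  have : NeZero (Monoid.exponent (G ⧸ H)) := ⟨Monoid.exponent_ne_zero_of_finite⟩
  obtain ⟨eG⟩ := monoidHom_mulEquiv_of_hasEnoughRootsOfUnity G ℂ
  obtain ⟨eH⟩ := monoidHom_mulEquiv_of_hasEnoughRootsOfUnity H ℂ
  obtain ⟨eQ⟩ := monoidHom_mulEquiv_of_hasEnoughRootsOfUnity (G ⧸ H) ℂ
  let r := domRestrictHom H ℂˣ
  refine ⟨eH.toMonoidHom.comp (r.comp eG.symm.toMonoidHom), ⟨?_⟩⟩
  have hker : (eH.toMonoidHom.comp (r.comp eG.symm.toMonoidHom)).ker =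
      r.ker.map eG.toMonoidHom := by
    rw [ker_comp_of_injective _ _ eH.injective]
    exact ker_comp_mulEquiv r eG.symm
  exact (MulEquiv.subgroupCongr hker).trans
    ((eG.subgroupMap r.ker).symm.trans ((domRestrictHomKerEquiv ℂˣ H).trans eQ))

noncomputable def QuotientAddGroup.addEquivAdditiveQuotient {A : Type*} [AddCommGroup A]
    (B : AddSubgroup A) : A ⧸ B ≃+ Additive (Multiplicative A ⧸ B.toSubgroup) :=
  let π : A →+ Additive (Multiplicative A ⧸ B.toSubgroup) :=
    MonoidHom.toAdditive (QuotientGroup.mk' B.toSubgroup)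
  have hker : π.ker = B := by
    ext a
    exact QuotientGroup.eq_one_iff (N := B.toSubgroup) (Multiplicative.ofAdd a)
  (QuotientAddGroup.quotientAddEquivOfEq hker.symm).trans
    (QuotientAddGroup.quotientKerEquivOfSurjective π (QuotientGroup.mk'_surjective B.toSubgroup))

-- `Additive ↥B.toSubgroup` is definitionally `↥B`, and `Additive ↥φ.ker` is `↥(toAdditive φ).ker`.
theorem AddCommGroup.exists_addMonoidHom_ker_addEquiv_quotient {A : Type*} [AddCommGroup A]
    [Finite A] (B : AddSubgroup A) : ∃ f : A →+ B, Nonempty (f.ker ≃+ A ⧸ B) := by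
  obtain ⟨φ, ⟨e⟩⟩ := CommGroup.exists_monoidHom_ker_mulEquiv_quotient B.toSubgroup
  exact ⟨MonoidHom.toAdditive φ,
    ⟨(MulEquiv.toAdditive e).trans (QuotientAddGroup.addEquivAdditiveQuotient B).symm⟩⟩

theorem stmt5_general (A : Type*) [AddCommGroup A] [Finite A] (B : AddSubgroup A)
    (k : ℕ) :
    DavK A k ≤ DavK B (DavK (A ⧸ B) k) := by
  obtain ⟨f, ⟨e⟩⟩ := AddCommGroup.exists_addMonoidHom_ker_addEquiv_quotient B
  exact (davK_le_davK_davK_ker f k).trans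
    (davK_mono (davK_le_davK_of_injective (f := e.toAddMonoidHom) e.injective))

/-- For a subgroup `B` of a finite abelian group `A` and `k ≥ 1`,
`D_k(A) ≤ D_{D_k(A/B)}(B)`. -/
theorem stmt5 (A : Type*) [AddCommGroup A] [Finite A] (B : AddSubgroup A)
    (k : ℕ) (hk : 1 ≤ k) :
    DavK A k ≤ DavK B (DavK (A ⧸ B) k) :=
  stmt5_general A B k
end

section
/- For a cyclic group Z/nZ and any k ≥ 1, the generalized Davenport constant satisfies D_k(Z/nZ) = kn. -/
private lemma card_msum {α : Type*} (P : Multiset (Multiset α)) :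
    Multiset.card P.sum = (P.map Multiset.card).sum := by
  induction P using Multiset.induction with
  | empty => simp
  | cons a s ih => simp [ih]

/-- Any multiset over `ZMod n` of size at least `n` has a nonempty zero-sum
submultiset of size at most `n`. -/
private lemma exists_zero_sum_sub {n : ℕ} (hn : 0 < n) (S : Multiset (ZMod n))
    (h : n ≤ Multiset.card S) :
    ∃ T : Multiset (ZMod n), T ≤ S ∧ T ≠ 0 ∧ T.sum = 0 ∧ Multiset.card T ≤ n := by
  haveI : NeZero n := ⟨hn.ne'⟩
  obtain ⟨l, rfl⟩ : ∃ l : List (ZMod n), (l : Multiset (ZMod n)) = S := ⟨S.toList, S.coe_toList⟩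
  have hlen : n ≤ l.length := by simpa using h
  have hcard : Fintype.card (ZMod n) < Fintype.card (Fin (n + 1)) := by
    simp [ZMod.card]
  obtain ⟨i, j, hij, hfeq⟩ :=
    Fintype.exists_ne_map_eq_of_card_lt (fun i : Fin (n + 1) => (l.take i).sum) hcard
  set a : ℕ := min (i : ℕ) (j : ℕ) with ha
  set b : ℕ := max (i : ℕ) (j : ℕ) with hb
  have hij' : (i : ℕ) ≠ (j : ℕ) := fun h => hij (Fin.ext h)
  have hab : a < b := by
    rcases hij'.lt_or_gt with h' | h'
    · rw [ha, hb, min_eq_left h'.le, max_eq_right h'.le]; exact h'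
    · rw [ha, hb, min_eq_right h'.le, max_eq_left h'.le]; exact h'
  have hbn : b ≤ n := max_le (Nat.lt_succ_iff.mp i.isLt) (Nat.lt_succ_iff.mp j.isLt)
  have hbl : b ≤ l.length := hbn.trans hlen
  have hsum : (l.take a).sum = (l.take b).sum := by
    rcases le_total (i : ℕ) (j : ℕ) with h' | h'
    · rw [ha, hb, min_eq_left h', max_eq_right h']; exact hfeq
    · rw [ha, hb, min_eq_right h', max_eq_left h']; exact hfeq.symm
  refine ⟨(((l.take b).drop a : List (ZMod n)) : Multiset (ZMod n)), ?_, ?_, ?_, ?_⟩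
  · exact Multiset.coe_le.mpr (((l.take b).drop_sublist a).trans (l.take_sublist b)).subperm
  · have hlen' : ((l.take b).drop a).length = b - a := by
      rw [List.length_drop, List.length_take, min_eq_left hbl]
    intro h0
    have : ((l.take b).drop a).length = 0 := by
      rw [← Multiset.coe_card, h0]; simp
    omega
  · have hsplit : l.take a ++ (l.take b).drop a = l.take b := by
      have := List.take_append_drop a (l.take b)
      rwa [List.take_take, min_eq_left hab.le] at this
    have := congrArg List.sum hsplit
    rw [List.sum_append] at this
    have : (l.take a).sum + ((l.take b).drop a).sum = (l.take a).sum := by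
      rw [this, ← hsum]
    simpa using (add_left_cancel (a := (l.take a).sum) (by rw [this, add_zero]))
  · have : ((l.take b).drop a).length = b - a := by
      rw [List.length_drop, List.length_take, min_eq_left hbl]
    rw [Multiset.coe_card, this]; omega

private lemma extract_s6 {n : ℕ} (hn : 0 < n) :
    ∀ (j : ℕ) (S : Multiset (ZMod n)), S.sum = 0 → j * n + 1 ≤ Multiset.card S →
    ∃ P : Multiset (Multiset (ZMod n)), P.sum = S ∧
      (∀ T ∈ P, T ≠ 0 ∧ Multiset.sum T = 0) ∧ j + 1 ≤ Multiset.card P := by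
  intro j
  induction j with
  | zero =>
    intro S hS hcard
    refine ⟨{S}, by simp, ?_, by simp⟩
    intro T hT
    rw [Multiset.mem_singleton] at hT
    subst hT
    refine ⟨?_, hS⟩
    intro h0
    rw [h0] at hcard; simp at hcard
  | succ j ih =>
    intro S hS hcard
    obtain ⟨T, hTS, hT0, hTsum, hTcard⟩ := exists_zero_sum_sub hn S (by nlinarith)
    obtain ⟨U, hU⟩ := Multiset.le_iff_exists_add.mp hTS
    have hUsum : U.sum = 0 := by
      have := congrArg Multiset.sum hU
      rw [Multiset.sum_add, hTsum, zero_add] at this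
      rw [← this, hS]
    have hUcard : j * n + 1 ≤ Multiset.card U := by
      have h1 := congrArg Multiset.card hU
      rw [Multiset.card_add] at h1
      have h2 : (j + 1) * n = j * n + n := by ring
      omega
    obtain ⟨P, hPsum, hPgood, hPcard⟩ := ih U hUsum hUcard
    refine ⟨T ::ₘ P, ?_, ?_, ?_⟩
    · rw [Multiset.sum_cons, hPsum, hU]
    · intro W hW
      rcases Multiset.mem_cons.mp hW with h | h
      · subst h; exact ⟨hT0, hTsum⟩
      · exact hPgood W h
    · rw [Multiset.card_cons]; omega

/-- For the cyclic group `ℤ/nℤ` and `k ≥ 1`, `D_k(ℤ/nℤ) = k·n`. -/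
theorem stmt6 (n k : ℕ) (hn : 0 < n) (hk : 1 ≤ k) :
    DavK (ZMod n) k = k * n := by
  haveI : NeZero n := ⟨hn.ne'⟩
  set Q := {m : ℕ | ∃ S : Multiset (ZMod n), S.sum = 0 ∧ Multiset.card S = m ∧
    ∀ P : Multiset (Multiset (ZMod n)), P.sum = S →
      (∀ T ∈ P, T ≠ 0 ∧ Multiset.sum T = 0) → Multiset.card P ≤ k} with hQ
  have hub : ∀ m ∈ Q, m ≤ k * n := by
    rintro m ⟨S, hSsum, hScard, hSmax⟩
    by_contra h
    push_neg at h
    obtain ⟨P, hPsum, hPgood, hPcard⟩ := extract_s6 hn k S hSsum (by omega)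
    have := hSmax P hPsum hPgood
    omega
  have hmem : k * n ∈ Q := by
    refine ⟨Multiset.replicate (k * n) (1 : ZMod n), ?_, by simp, ?_⟩
    · rw [Multiset.sum_replicate, nsmul_eq_mul, mul_one]
      push_cast
      simp [ZMod.natCast_self]
    · intro P hPsum hPgood
      have hcards : ∀ T ∈ P, n ≤ Multiset.card T := by
        intro T hT
        have hTle : T ≤ P.sum := Multiset.le_sum_of_mem hT
        rw [hPsum] at hTle
        have hTrep : T = Multiset.replicate (Multiset.card T) (1 : ZMod n) := by
          rw [Multiset.eq_replicate]
          exact ⟨rfl, fun b hb => Multiset.eq_of_mem_replicate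
            (Multiset.mem_of_le hTle hb)⟩
        have hTsum0 : ((Multiset.card T : ℕ) : ZMod n) = 0 := by
          have := (hPgood T hT).2
          rw [hTrep, Multiset.sum_replicate, nsmul_eq_mul, mul_one] at this
          exact this
        have hdvd : n ∣ Multiset.card T := (ZMod.natCast_eq_zero_iff _ _).mp hTsum0
        have hpos : 0 < Multiset.card T := Multiset.card_pos.mpr (hPgood T hT).1
        exact Nat.le_of_dvd hpos hdvd
      have hsum : Multiset.card P * n ≤ (P.map Multiset.card).sum := by
        have := Multiset.card_nsmul_le_sum (s := P.map Multiset.card) (a := n)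
          (fun x hx => by
            obtain ⟨T, hT, rfl⟩ := Multiset.mem_map.mp hx
            exact hcards T hT)
        simpa [smul_eq_mul] using this
      have hcardsum : (P.map Multiset.card).sum = k * n := by
        rw [← card_msum, hPsum]; simp
      rw [hcardsum] at hsum
      exact Nat.le_of_mul_le_mul_right (by omega) hn
  rw [DavK, ← hQ]
  exact le_antisymm (csSup_le ⟨k * n, hmem⟩ hub) (le_csSup ⟨k * n, hub⟩ hmem)
end

section
/- Let J be a non-unital commutative algebra over a field F on which a finite group G acts by algebra automorphisms, and let H ≤ G be a subgroup such that char(F) > [G:H] or char(F) = 0. Then the product of any [G:H] elements of the fixed subalgebra J^H lies in J^H·J^G + J^G. -/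
open scoped Pointwise

lemma polar_aux {R : Type*} [CommRing R] {ι : Type*} [DecidableEq ι] (x : ι → R) :
    ∀ (s : Finset ι) (k : ℕ), k ≤ s.card →
      (∑ T ∈ s.powerset, (-1 : R) ^ (s.card - T.card) * (∑ i ∈ T, x i) ^ k)
        = if s.card = k then (k.factorial : R) * ∏ i ∈ s, x i else 0 := by
  intro s
  induction s using Finset.induction_on with
  | empty =>
      intro k hk
      simp only [Finset.card_empty, Nat.le_zero] at hk
      subst hk
      simp
  | @insert a s ha ih =>
      intro k hk
      rw [Finset.sum_powerset_insert ha]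
      have hcard : (insert a s).card = s.card + 1 := Finset.card_insert_of_notMem ha
      have key : ∀ T ∈ s.powerset,
          (-1 : R) ^ ((insert a s).card - T.card) * (∑ i ∈ T, x i) ^ k
            + (-1 : R) ^ ((insert a s).card - (insert a T).card) * (∑ i ∈ insert a T, x i) ^ k
          = ∑ j ∈ Finset.range k,
              (-1 : R) ^ (s.card - T.card)
                * ((∑ i ∈ T, x i) ^ j * (x a) ^ (k - j) * (k.choose j : R)) := by
        intro T hT
        rw [Finset.mem_powerset] at hT
        have haT : a ∉ T := fun h => ha (hT h)
        have hTc : T.card ≤ s.card := Finset.card_le_card hT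
        have hins : (insert a T).card = T.card + 1 := Finset.card_insert_of_notMem haT
        rw [hcard, hins, Finset.sum_insert haT]
        have he1 : s.card + 1 - T.card = (s.card - T.card) + 1 := by omega
        have he2 : s.card + 1 - (T.card + 1) = s.card - T.card := by omega
        rw [he1, he2]
        have expand : (x a + ∑ i ∈ T, x i) ^ k
            = ∑ j ∈ Finset.range (k + 1),
                (∑ i ∈ T, x i) ^ j * (x a) ^ (k - j) * (k.choose j : R) := by
          rw [add_comm (x a), add_pow]
        rw [expand, Finset.sum_range_succ, Nat.choose_self, Nat.sub_self, pow_zero,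
          Nat.cast_one, mul_one, mul_add, Finset.mul_sum, pow_succ]
        ring
      rw [← Finset.sum_add_distrib, Finset.sum_congr rfl key, Finset.sum_comm]
      have inner : ∀ j ∈ Finset.range k,
          (∑ T ∈ s.powerset,
            (-1 : R) ^ (s.card - T.card)
              * ((∑ i ∈ T, x i) ^ j * (x a) ^ (k - j) * (k.choose j : R)))
          = (if s.card = j then (j.factorial : R) * ∏ i ∈ s, x i else 0)
              * ((x a) ^ (k - j) * (k.choose j : R)) := by
        intro j hj
        rw [Finset.mem_range] at hj
        rw [Finset.sum_congr rfl
          (fun T _ => by ring :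
            ∀ T ∈ s.powerset,
              (-1 : R) ^ (s.card - T.card)
                * ((∑ i ∈ T, x i) ^ j * (x a) ^ (k - j) * (k.choose j : R))
              = ((-1 : R) ^ (s.card - T.card) * (∑ i ∈ T, x i) ^ j)
                  * ((x a) ^ (k - j) * (k.choose j : R))),
          ← Finset.sum_mul, ih j (by omega)]
      rw [Finset.sum_congr rfl inner]
      by_cases hks : k = s.card + 1
      · subst hks
        rw [Finset.sum_eq_single_of_mem s.card (Finset.mem_range.mpr (by omega))]
        · rw [if_pos rfl, if_pos hcard]
          have h1 : s.card + 1 - s.card = 1 := by omega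
          rw [h1, Nat.choose_succ_self_right, Finset.prod_insert ha, Nat.factorial_succ]
          push_cast
          ring
        · intro j _ hj
          rw [if_neg (fun h => hj h.symm), zero_mul]
      · rw [Finset.sum_eq_zero, if_neg (by omega)]
        intro j hj
        rw [Finset.mem_range] at hj
        rw [if_neg (by omega), zero_mul]


section Helpers

variable {F G J : Type*} [Field F] [Group G] [NonUnitalCommRing J] [Module F J]
  [SMulCommClass F J J] [IsScalarTower F J J]

/-- The coercion `J →ₗ[F] Unitization F J` as a linear map. -/
def inrL (F : Type*) (J : Type*) [Field F] [NonUnitalCommRing J] [Module F J] :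
    J →ₗ[F] Unitization F J where
  toFun := (Unitization.inr : J → Unitization F J)
  map_add' := Unitization.inr_add F
  map_smul' := fun c x => Unitization.inr_smul F c x

@[simp] lemma inrL_apply (x : J) : inrL F J x = (x : Unitization F J) := rfl

/-- A ring automorphism commuting with scalars, as a non-unital algebra hom. -/
def rhoNA (ρ : G →* RingAut J) (hlin : ∀ (g : G) (c : F) (x : J), ρ g (c • x) = c • ρ g x)
    (g : G) : J →ₙₐ[F] J where
  toFun := ρ g
  map_smul' := hlin g
  map_zero' := map_zero _
  map_add' := map_add _
  map_mul' := map_mul _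

/-- The induced algebra endomorphism of the unitization. -/
noncomputable def sigmaA (ρ : G →* RingAut J)
    (hlin : ∀ (g : G) (c : F) (x : J), ρ g (c • x) = c • ρ g x) (g : G) :
    Unitization F J →ₐ[F] Unitization F J :=
  Unitization.lift ((Unitization.inrNonUnitalAlgHom F J).comp (rhoNA ρ hlin g))

@[simp] lemma sigmaA_inr (ρ : G →* RingAut J)
    (hlin : ∀ (g : G) (c : F) (x : J), ρ g (c • x) = c • ρ g x) (g : G) (x : J) :
    sigmaA ρ hlin g (x : Unitization F J) = ((ρ g x : J) : Unitization F J) := by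
  simp [sigmaA, rhoNA]

end Helpers

lemma map_esymm {R S : Type*} [CommRing R] [CommRing S] {T : Type*} [FunLike T R S]
    [RingHomClass T R S] (φ : T) (s : Multiset R) (k : ℕ) :
    φ (s.esymm k) = (s.map φ).esymm k := by
  rw [Multiset.esymm, Multiset.esymm, map_multiset_sum, Multiset.map_map,
    Multiset.powersetCard_map, Multiset.map_map]
  congr 1
  apply Multiset.map_congr rfl
  intro t _
  exact (map_multiset_prod (φ : R →+* S) t).trans rfl

lemma stepA {F G J : Type*} [Field F] [Group G] [NonUnitalCommRing J] [Module F J]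
    [SMulCommClass F J J] [IsScalarTower F J J]
    (ρ : G →* RingAut J) (hlin : ∀ (g : G) (c : F) (x : J), ρ g (c • x) = c • ρ g x)
    (H : Subgroup G) [Fintype (G ⧸ H)]
    (JH JG : Set J) (hJH : JH = {x : J | ∀ h ∈ H, ρ h x = x})
    (hJG : JG = {x : J | ∀ g : G, ρ g x = x})
    (x : J) (hx : x ∈ JH) :
    (x : Unitization F J) ^ (Fintype.card (G ⧸ H)) ∈
      (Submodule.span F (JH * JG ∪ JG)).map (inrL F J) := by
  classical
  subst hJH hJG
  set n := Fintype.card (G ⧸ H) with hn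
  set M := (Submodule.span F (({x : J | ∀ h ∈ H, ρ h x = x} * {x : J | ∀ g : G, ρ g x = x}
    ∪ {x : J | ∀ g : G, ρ g x = x} : Set J))).map (inrL F J) with hM
  -- the coset-translate function
  have hcoset : ∀ u v : G, (u : G ⧸ H) = (v : G ⧸ H) → ρ u x = ρ v x := by
    intro u v huv
    rw [QuotientGroup.eq] at huv
    have hv : v = u * (u⁻¹ * v) := by group
    rw [hv, map_mul]
    show ρ u x = ρ u (ρ (u⁻¹ * v) x)
    rw [hx _ huv]
  set b : G ⧸ H → J := fun q => ρ q.out x with hb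
  have hb_mk : ∀ g : G, b (g : G ⧸ H) = ρ g x := by
    intro g
    exact hcoset _ _ (QuotientGroup.out_eq' _)
  have hb_smul : ∀ (g : G) (q : G ⧸ H), b (g • q) = ρ g (b q) := by
    intro g q
    induction q using QuotientGroup.induction_on with
    | H u =>
        rw [MulAction.Quotient.smul_mk, hb_mk, hb_mk, smul_eq_mul, map_mul]
        rfl
  set Ms : Multiset (Unitization F J) :=
    (Finset.univ : Finset (G ⧸ H)).val.map (fun q => ((b q : J) : Unitization F J)) with hMs
  have hcardMs : Multiset.card Ms = n := by simp [hMs, hn, Finset.card_univ]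
  -- the polynomial relation
  have hzero : Polynomial.eval (x : Unitization F J)
      ((Ms.map fun t => Polynomial.X - Polynomial.C t).prod) = 0 := by
    rw [Polynomial.eval_multiset_prod]
    apply Multiset.prod_eq_zero
    rw [Multiset.map_map]
    have hb1 : b ((1 : G) : G ⧸ H) = x := by rw [hb_mk, map_one]; rfl
    refine Multiset.mem_map.mpr ⟨((b ((1 : G) : G ⧸ H) : J) : Unitization F J),
      Multiset.mem_map.mpr ⟨((1 : G) : G ⧸ H), by simp, rfl⟩, ?_⟩
    rw [hb1]
    simp
  -- Vieta's relation
  have h0 : (0 : Unitization F J)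
      = ∑ j ∈ Finset.range (n + 1),
          (-1 : Unitization F J) ^ j
            * (Ms.esymm j * (x : Unitization F J) ^ (n - j)) := by
    rw [← hzero, Multiset.prod_X_sub_X_eq_sum_esymm, Polynomial.eval_finset_sum]
    apply Finset.sum_congr (by rw [hcardMs])
    intro j _
    simp [hcardMs]
  rw [Finset.sum_range_succ'] at h0
  have hes0 : Ms.esymm 0 = 1 := by simp [Multiset.esymm]
  rw [hes0] at h0
  simp only [pow_zero, one_mul, mul_one, Nat.sub_zero] at h0
  have hxn : (x : Unitization F J) ^ n
      = ∑ i ∈ Finset.range n,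
          -((-1 : Unitization F J) ^ (i + 1)
            * (Ms.esymm (i + 1) * (x : Unitization F J) ^ (n - (i + 1)))) := by
    rw [Finset.sum_neg_distrib]
    linear_combination -h0
  -- sign helper
  have hsign : ∀ (m : ℕ) (z : Unitization F J), z ∈ M → (-1 : Unitization F J) ^ m * z ∈ M := by
    intro m z hz
    rcases Nat.even_or_odd m with h | h
    · rw [h.neg_one_pow, one_mul]; exact hz
    · rw [h.neg_one_pow, neg_one_mul]; exact M.neg_mem hz
  -- powers of x inside J
  let pw : ℕ → J := fun m => Nat.rec x (fun _ ih => ih * x) m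
  have hpw_inr : ∀ m : ℕ, (Unitization.inr (pw m) : Unitization F J) = (x : Unitization F J) ^ (m + 1) := by
    intro m
    induction m with
    | zero => simp [pw]
    | succ m ih =>
        show (Unitization.inr (pw m * x) : Unitization F J) = _
        rw [Unitization.inr_mul, ih]
        ring
  have hpw_H : ∀ m : ℕ, ∀ h ∈ H, ρ h (pw m) = pw m := by
    intro m
    induction m with
    | zero => exact hx
    | succ m ih =>
        intro h hh
        show ρ h (pw m * x) = pw m * x
        rw [map_mul, ih h hh, hx h hh]
  -- invariance machinery
  have hperm : ∀ g : G, Ms.map (sigmaA ρ hlin g) = Ms := by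
    intro g
    have h2 : Multiset.map (fun q : G ⧸ H => g • q) (Finset.univ.val) = Finset.univ.val := by
      have h3 := congrArg Finset.val
        (Finset.map_univ_equiv (MulAction.toPerm g : Equiv.Perm (G ⧸ H)))
      rw [Finset.map_val] at h3
      simpa using h3
    conv_rhs => rw [hMs, ← h2]
    rw [hMs, Multiset.map_map, Multiset.map_map]
    apply Multiset.map_congr rfl
    intro q _
    simp [hb_smul]
  rw [hxn]
  apply Submodule.sum_mem
  intro i hi
  rw [Finset.mem_range] at hi
  apply Submodule.neg_mem
  apply hsign
  set k := i + 1 with hk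
  have hkn : k ≤ n := by omega
  -- esymm k is the image of a G-invariant element of J
  have hfst : (Ms.esymm k).fst = 0 := by
    have h4 : (Unitization.fstHom F J) ((Multiset.map Multiset.prod (Ms.powersetCard k)).sum)
        = 0 := by
      rw [map_multiset_sum, Multiset.map_map]
      apply Multiset.sum_eq_zero
      intro z hz
      rw [Multiset.mem_map] at hz
      obtain ⟨t, ht, rfl⟩ := hz
      rw [Multiset.mem_powersetCard] at ht
      obtain ⟨hle, hcard⟩ := ht
      have htne : t ≠ 0 := by
        intro h
        rw [h] at hcard
        simp [hk] at hcard
      obtain ⟨z0, hz0⟩ := Multiset.exists_mem_of_ne_zero htne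
      have hz0Ms : z0 ∈ Ms := Multiset.mem_of_le hle hz0
      rw [hMs, Multiset.mem_map] at hz0Ms
      obtain ⟨q, _, hq⟩ := hz0Ms
      have hsplit : (Multiset.prod t) = z0 * (t.erase z0).prod := by
        rw [← Multiset.prod_cons, Multiset.cons_erase hz0]
      show (Multiset.prod t).fst = 0
      rw [hsplit, Unitization.fst_mul, ← hq, Unitization.fst_inr, zero_mul]
    exact h4
  set e := (Ms.esymm k).snd with he
  have hE : ((e : J) : Unitization F J) = Ms.esymm k := by
    conv_rhs => rw [← Unitization.inl_fst_add_inr_snd_eq (Ms.esymm k)]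
    rw [hfst, Unitization.inl_zero, zero_add]
  have heG : ∀ g : G, ρ g e = e := by
    intro g
    apply Unitization.inr_injective (R := F)
    calc ((ρ g e : J) : Unitization F J)
        = sigmaA ρ hlin g ((e : J) : Unitization F J) := (sigmaA_inr ρ hlin g e).symm
      _ = sigmaA ρ hlin g (Ms.esymm k) := by rw [hE]
      _ = (Ms.map (sigmaA ρ hlin g)).esymm k := map_esymm _ _ _
      _ = Ms.esymm k := by rw [hperm]
      _ = ((e : J) : Unitization F J) := hE.symm
  by_cases hkeq : k = n
  · have hnk0 : n - k = 0 := by omega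
    rw [← hE, hnk0, pow_zero, mul_one]
    exact Submodule.mem_map_of_mem (Submodule.subset_span (Set.mem_union_right _ heG))
  · have hklt : k < n := lt_of_le_of_ne hkn hkeq
    have hnk : n - k = (n - k - 1) + 1 := by omega
    have key : Ms.esymm k * (x : Unitization F J) ^ (n - k)
        = (Unitization.inr (pw (n - k - 1) * e) : Unitization F J) := by
      rw [Unitization.inr_mul, hpw_inr, ← hnk, ← hE, mul_comm]
    rw [key]
    exact Submodule.mem_map_of_mem (Submodule.subset_span
      (Set.mem_union_left _ (Set.mul_mem_mul (hpw_H _) heG)))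

/-- Proposition: if `J` is a non-unital commutative `F`-algebra with a finite group
`G` acting by `F`-algebra automorphisms, `H ≤ G` a subgroup, and `char F = 0` or
`char F > [G:H]`, then any product of `[G:H]` elements of `J^H` lies in
`J^H·J^G + J^G` (the `F`-span of `J^H·J^G ∪ J^G`). -/
theorem stmt9 (F : Type*) [Field F] (G : Type*) [Group G] [Finite G]
    (J : Type*) [NonUnitalCommRing J] [Module F J]
    [SMulCommClass F J J] [IsScalarTower F J J]
    (ρ : G →* RingAut J) (hlin : ∀ (g : G) (c : F) (x : J), ρ g (c • x) = c • ρ g x)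
    (H : Subgroup G)
    (hchar : ringChar F = 0 ∨ H.index < ringChar F)
    (JH : Set J) (hJH : JH = {x : J | ∀ h ∈ H, ρ h x = x})
    (JG : Set J) (hJG : JG = {x : J | ∀ g : G, ρ g x = x})
    (a : J) (l : List J) (haH : a ∈ JH) (hlH : ∀ x ∈ l, x ∈ JH)
    (hlen : l.length + 1 = H.index) :
    l.foldl (· * ·) a ∈ Submodule.span F (JH * JG ∪ JG) := by
  classical
  have : Fintype (G ⧸ H) := Fintype.ofFinite _
  have hncard : Fintype.card (G ⧸ H) = H.index := by
    rw [Subgroup.index_eq_card, Nat.card_eq_fintype_card]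
  set n := H.index with hn
  have hn1 : 1 ≤ n := by omega
  set L : List J := a :: l with hL
  have hLlen : L.length = n := by rw [hL]; simpa using hlen
  set w : ℕ → J := fun i => L.getD i 0 with hw
  have hmemJH : ∀ z ∈ L, z ∈ JH := by
    intro z hz
    rcases List.mem_cons.mp hz with rfl | hz'
    · exact haH
    · exact hlH _ hz'
  have hwH : ∀ i, i < n → w i ∈ JH := by
    intro i hi
    have hi' : i < L.length := by omega
    rw [hw]
    simp only
    rw [List.getD_eq_getElem L 0 hi']
    exact hmemJH _ (List.getElem_mem hi')
  -- JH is closed under 0 and +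
  have hJH0 : (0 : J) ∈ JH := by
    rw [hJH]; intro h _; exact map_zero _
  have hJHadd : ∀ u v : J, u ∈ JH → v ∈ JH → u + v ∈ JH := by
    rw [hJH]
    intro u v hu hv h hh
    rw [map_add, hu h hh, hv h hh]
  have hsum : ∀ T : Finset ℕ, T ⊆ Finset.range n → (∑ i ∈ T, w i) ∈ JH := by
    intro T
    induction T using Finset.induction_on with
    | empty => intro _; simpa using hJH0
    | @insert c T' hc ih =>
        intro hsub
        rw [Finset.sum_insert hc]
        refine hJHadd _ _ ?_ (ih (fun z hz => hsub (Finset.mem_insert_of_mem hz)))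
        exact hwH c (Finset.mem_range.mp (hsub (Finset.mem_insert_self _ _)))
  -- the product as a Finset product in the unitization
  have hfoldR : ∀ (l' : List J) (c : J),
      (Unitization.inr (l'.foldl (· * ·) c) : Unitization F J)
        = Unitization.inr c * (l'.map (fun z => (Unitization.inr z : Unitization F J))).prod := by
    intro l'
    induction l' with
    | nil => intro c; simp
    | cons y t ih =>
        intro c
        simp only [List.foldl_cons, List.map_cons, List.prod_cons, ih, Unitization.inr_mul]
        ring
  have hlistFin : ∀ l' : List J,
      ((l'.map (fun z => (Unitization.inr z : Unitization F J))).prod)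
        = ∏ i ∈ Finset.range l'.length, (Unitization.inr (l'.getD i 0) : Unitization F J) := by
    intro l'
    induction l' with
    | nil => simp
    | cons y t ih =>
        rw [List.map_cons, List.prod_cons, ih, List.length_cons, Finset.prod_range_succ']
        simp only [List.getD_cons_succ, List.getD_cons_zero]
        ring
  have hfold : (Unitization.inr (l.foldl (· * ·) a) : Unitization F J)
      = ∏ i ∈ Finset.range n, (Unitization.inr (w i) : Unitization F J) := by
    have h1 : (L.map (fun z => (Unitization.inr z : Unitization F J))).prod
        = Unitization.inr a * (l.map (fun z => (Unitization.inr z : Unitization F J))).prod := by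
      rw [hL, List.map_cons, List.prod_cons]
    rw [hfoldR l a, ← h1, hlistFin L, hLlen]
  set M := (Submodule.span F (JH * JG ∪ JG)).map (inrL F J) with hM
  -- polarization
  have hpol := polar_aux (fun i : ℕ => (Unitization.inr (w i) : Unitization F J))
    (Finset.range n) n (by rw [Finset.card_range])
  rw [Finset.card_range, if_pos rfl] at hpol
  have hterms : ∀ T ∈ (Finset.range n).powerset,
      (-1 : Unitization F J) ^ (n - T.card)
        * (∑ i ∈ T, (Unitization.inr (w i) : Unitization F J)) ^ n ∈ M := by
    intro T hT
    rw [Finset.mem_powerset] at hT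
    have hsum_inr : (∑ i ∈ T, (Unitization.inr (w i) : Unitization F J))
        = Unitization.inr (∑ i ∈ T, w i) := by
      exact (map_sum (inrL F J) w T).symm
    rw [hsum_inr]
    have hstep := stepA (F := F) ρ hlin H JH JG hJH hJG _ (hsum T hT)
    rw [hncard] at hstep
    rcases Nat.even_or_odd (n - T.card) with h | h
    · rw [h.neg_one_pow, one_mul]; exact hstep
    · rw [h.neg_one_pow, neg_one_mul]; exact M.neg_mem hstep
  have hNP : (n.factorial : Unitization F J)
      * ∏ i ∈ Finset.range n, (Unitization.inr (w i) : Unitization F J) ∈ M := by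
    rw [← hpol]
    exact Submodule.sum_mem _ hterms
  -- the factorial is invertible
  have hfacF : ((n.factorial : F)) ≠ 0 := by
    haveI : CharP F (ringChar F) := ringChar.charP F
    intro hzero
    rw [CharP.cast_eq_zero_iff F (ringChar F)] at hzero
    rcases hchar with h0 | hlt
    · rw [h0, zero_dvd_iff] at hzero
      exact (Nat.factorial_pos n).ne' hzero
    · have hp : (ringChar F).Prime :=
        CharP.char_prime_of_ne_zero F (by omega)
      rw [hp.dvd_factorial] at hzero
      omega
  have hmain : (Unitization.inr (l.foldl (· * ·) a) : Unitization F J) ∈ M := by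
    have h1 : ((n.factorial : F))
        • (∏ i ∈ Finset.range n, (Unitization.inr (w i) : Unitization F J)) ∈ M := by
      rw [Algebra.smul_def, map_natCast]
      exact hNP
    have h2 := M.smul_mem ((n.factorial : F))⁻¹ h1
    rw [smul_smul, inv_mul_cancel₀ hfacF, one_smul] at h2
    rw [hfold]
    exact h2
  obtain ⟨y, hy, hxy⟩ := Submodule.mem_map.mp hmain
  have hyy : y = l.foldl (· * ·) a := Unitization.inr_injective (R := F) hxy
  exact hyy ▸ hy
end

section
/- Let a finite group G act on a non-unital commutative F-algebra J by algebra automorphisms, with |G| invertible in F, and let H ≤ G be any subgroup. Then (J^H)^{[G:H]} ⊆ J^H·J^G + J^G, i.e., any product of [G:H] elements of J^H lies in J^H·J^G + J^G. -/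
/-!
Pick `σ i` with `g * σ i ∈ H` for every `g ∈ G` and some `i` (coset representatives of `G ⧸ H`,
one per factor `u i`). For each `g` the product `∏ i, (u i - (g * σ i) • u i)` vanishes, since the
factor with `g * σ i ∈ H` is zero. Expanding it and summing over `g` gives
`0 = ∑ T, (∏ i ∈ T, u i) * τ (∏ i ∉ T, -(σ i • u i))`, where `τ` is the transfer `∑ g, g • _`.
The term `T = univ` is `|G| • ∏ i, u i`, the term `T = ∅` is `G`-invariant, and every other term
lies in `J^H * J^G`; dividing by `|G|` gives the claim. Empty products only make sense after
adjoining a unit, so the computation takes place in `Unitization F J`.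
-/

open Finset MulAction
open scoped Pointwise

section Transfer

variable (G : Type*) {M : Type*} [Group G] [Fintype G] [AddCommMonoid M] [DistribMulAction G M]

def transfer (x : M) : M := ∑ g : G, g • x

variable {G}

theorem transfer_mem_fixedPoints (x : M) : transfer G x ∈ fixedPoints G M := fun g => by
  simp only [transfer, smul_sum, smul_smul]
  exact Fintype.sum_equiv (Equiv.mulLeft g) _ _ fun _ => rfl

theorem transfer_mem {S : Type*} [SetLike S M] [AddSubmonoidClass S M] {N : S}
    (hN : ∀ g : G, ∀ x ∈ N, g • x ∈ N) {x : M} (hx : x ∈ N) : transfer G x ∈ N :=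
  sum_mem fun g _ => hN g x hx

theorem transfer_one {R : Type*} [Semiring R] [MulSemiringAction G R] :
    transfer G (1 : R) = Fintype.card G • 1 := by
  simp [transfer]

end Transfer

theorem Finset.prod_mem_of_nonempty {ι M S : Type*} [CommMonoid M] [SetLike S M] [MulMemClass S M]
    {N : S} {s : Finset ι} (hs : s.Nonempty) {f : ι → M} (hf : ∀ i ∈ s, f i ∈ N) :
    ∏ i ∈ s, f i ∈ N :=
  prod_induction_nonempty f (· ∈ N) (fun _ _ => mul_mem) hs hf

theorem Subgroup.exists_forall_mul_mem {G : Type*} [Group G] (H : Subgroup G) [H.FiniteIndex]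
    {n : ℕ} (hn : H.index = n) : ∃ σ : Fin n → G, ∀ g, ∃ i, g * σ i ∈ H := by
  let e : G ⧸ H ≃ Fin n := Finite.equivFinOfCardEq (H.index_eq_card ▸ hn)
  refine ⟨fun i => (e.symm i).out, fun g => ⟨e (g⁻¹ : G), ?_⟩⟩
  obtain ⟨h, hh⟩ := QuotientGroup.mk_out_eq_mul H g⁻¹
  simp [hh]

section CommRing

variable {G R ι : Type*} [Group G] [Fintype G] [CommRing R] [MulSemiringAction G R] [Fintype ι]

theorem sum_powerset_prod_mul_transfer_eq_zero [DecidableEq ι] (σ : ι → G) (x : ι → R)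
    (hσ : ∀ g : G, ∃ i, (g * σ i) • x i = x i) :
    ∑ t ∈ univ.powerset, (∏ i ∈ t, x i) * transfer G (∏ i ∈ univ \ t, -(σ i • x i)) = 0 := by
  calc _ = ∑ g : G, ∏ i, (x i + g • -(σ i • x i)) := by
        simp only [transfer, mul_sum, prod_add, smul_prod']
        exact sum_comm
    _ = 0 := sum_eq_zero fun g _ => by
        obtain ⟨i, hi⟩ := hσ g
        exact prod_eq_zero (mem_univ i) (by rw [smul_neg, smul_smul, hi, add_neg_cancel])

theorem card_smul_prod_eq_neg_sum [DecidableEq ι] (σ : ι → G) (x : ι → R)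
    (hσ : ∀ g : G, ∃ i, (g * σ i) • x i = x i) :
    Fintype.card G • ∏ i, x i = -∑ t ∈ univ.powerset.erase univ,
      (∏ i ∈ t, x i) * transfer G (∏ i ∈ univ \ t, -(σ i • x i)) := by
  rw [eq_neg_iff_add_eq_zero, ← sum_powerset_prod_mul_transfer_eq_zero σ x hσ,
    ← add_sum_erase _ _ (mem_powerset_self _), sdiff_self, bot_eq_empty, prod_empty,
    transfer_one, mul_smul_one]

theorem card_smul_prod_mem_closure (N : NonUnitalSubring R) (hN : ∀ g : G, ∀ z ∈ N, g • z ∈ N)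
    (H : Subgroup G) (σ : ι → G) (hσ : ∀ g, ∃ i, g * σ i ∈ H) (x : ι → R)
    (hxN : ∀ i, x i ∈ N) (hxH : ∀ i, x i ∈ fixedPoints H R) :
    Fintype.card G • ∏ i, x i ∈ AddSubgroup.closure
      (((N : Set R) ∩ fixedPoints H R) * ((N : Set R) ∩ fixedPoints G R) ∪
        ((N : Set R) ∩ fixedPoints G R)) := by
  classical
  have hcover (g : G) : ∃ i, (g * σ i) • x i = x i := by
    obtain ⟨i, hi⟩ := hσ g
    exact ⟨i, hxH i ⟨_, hi⟩⟩
  have htransfer {s : Finset ι} (hs : s.Nonempty) :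
      transfer G (∏ i ∈ s, -(σ i • x i)) ∈ (N : Set R) ∩ fixedPoints G R :=
    ⟨transfer_mem hN (prod_mem_of_nonempty hs fun i _ => neg_mem (hN _ _ (hxN i))),
      transfer_mem_fixedPoints _⟩
  rw [card_smul_prod_eq_neg_sum σ x hcover]
  refine neg_mem (sum_mem fun t ht => ?_)
  have hc : (univ \ t).Nonempty := by
    rw [sdiff_nonempty]
    exact fun h => (mem_erase.1 ht).1 (eq_univ_of_forall fun i => h (mem_univ i))
  rcases t.eq_empty_or_nonempty with rfl | ht0
  · rw [prod_empty, one_mul]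
    exact AddSubgroup.subset_closure (Or.inr (htransfer hc))
  · refine AddSubgroup.subset_closure (Or.inl (Set.mul_mem_mul ⟨?_, ?_⟩ (htransfer hc)))
    · exact prod_mem_of_nonempty ht0 fun i _ => hxN i
    · exact fun h => by rw [smul_prod']; exact prod_congr rfl fun i _ => hxH i h

end CommRing

namespace Unitization

abbrev mulSemiringActionOfRingAut {F J G : Type*} [CommSemiring F] [NonUnitalSemiring J]
    [Module F J] [SMulCommClass F J J] [IsScalarTower F J J] [Monoid G] (ρ : G →* RingAut J)
    (hρ : ∀ (g : G) (c : F) (x : J), ρ g (c • x) = c • ρ g x) :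
    MulSemiringAction G (Unitization F J) where
  smul g z := mk (z.fst, ρ g z.snd)
  one_smul z := Unitization.ext rfl (congrArg (· z.snd) (map_one ρ))
  mul_smul g h z := Unitization.ext rfl (congrArg (· z.snd) (map_mul ρ g h))
  smul_zero g := Unitization.ext rfl (map_zero (ρ g))
  smul_add g z w := Unitization.ext rfl (map_add (ρ g) _ _)
  smul_one g := Unitization.ext rfl (map_zero (ρ g))
  smul_mul g z w := Unitization.ext rfl <| by
    show ρ g (z * w).snd = z.fst • ρ g w.snd + w.fst • ρ g z.snd + ρ g z.snd * ρ g w.snd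
    simp [hρ]

theorem inr_foldl_mul {F J : Type*} [CommSemiring F] [NonUnitalSemiring J] [Module F J]
    [SMulCommClass F J J] [IsScalarTower F J J] (a : J) (l : List J) :
    (inr (l.foldl (· * ·) a) : Unitization F J) = ((a :: l).map inr).prod := by
  induction l generalizing a with
  | nil => simp
  | cons b l ih => simp [ih, inr_mul, mul_assoc]

theorem image_inr_mul {F J : Type*} [CommSemiring F] [NonUnitalSemiring J] [Module F J]
    (s t : Set J) : (inr '' (s * t) : Set (Unitization F J)) = inr '' s * inr '' t :=
  Set.image_mul (inrNonUnitalAlgHom F J)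

theorem range_inr_inter_fixedPoints {F J M : Type*} [Zero F] [Zero J] [Monoid M]
    [MulAction M (Unitization F J)] (ρ : M → J → J)
    (hρ : ∀ m y, m • (inr y : Unitization F J) = inr (ρ m y)) :
    Set.range inr ∩ fixedPoints M (Unitization F J) = inr '' {y | ∀ m, ρ m y = y} := by
  rw [← Set.image_preimage_eq_range_inter]
  congr! 1
  ext y
  simp [mem_fixedPoints, hρ]

theorem inr_mem_closure_image_inr_iff {F J : Type*} [Ring F] [AddCommGroup J] [Module F J]
    {S : Set J} {y : J} :
    (inr y : Unitization F J) ∈ AddSubgroup.closure (inr '' S) ↔ y ∈ AddSubgroup.closure S := by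
  rw [← AddSubgroup.mem_map_iff_mem (f := (inrHom F F J).toAddMonoidHom) inr_injective,
    AddMonoidHom.map_closure]
  rfl

theorem card_smul_prod_inr_mem_closure {F J G ι : Type*} [CommRing F] [NonUnitalCommRing J]
    [Module F J] [SMulCommClass F J J] [IsScalarTower F J J] [Group G] [Fintype G] [Fintype ι]
    (ρ : G →* RingAut J) (hρ : ∀ (g : G) (c : F) (x : J), ρ g (c • x) = c • ρ g x)
    (H : Subgroup G) (σ : ι → G) (hσ : ∀ g, ∃ i, g * σ i ∈ H) (x : ι → J)
    (hx : ∀ i, ∀ h ∈ H, ρ h (x i) = x i) :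
    Fintype.card G • ∏ i, (inr (x i) : Unitization F J) ∈ AddSubgroup.closure (inr ''
      ({y | ∀ h ∈ H, ρ h y = y} * {y | ∀ g : G, ρ g y = y} ∪ {y | ∀ g : G, ρ g y = y})) := by
  let _ := mulSemiringActionOfRingAut ρ hρ
  let N := (inrNonUnitalAlgHom F J : J →ₙ+* Unitization F J).range
  have hN (g : G) : ∀ z ∈ N, g • z ∈ N := by
    rintro _ ⟨y, rfl⟩
    exact ⟨ρ g y, rfl⟩
  have hN_coe : (N : Set (Unitization F J)) = Set.range inr := NonUnitalRingHom.coe_range _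
  have hH : {y | ∀ h : H, ρ h y = y} = {y | ∀ h ∈ H, ρ h y = y} := Set.ext fun _ => Subtype.forall
  have key := card_smul_prod_mem_closure N hN H σ hσ (fun i => inr (x i)) (fun i => ⟨_, rfl⟩)
    (fun i h => congrArg inr (hx i h h.2))
  rwa [hN_coe, range_inr_inter_fixedPoints (fun h : H => ρ h) fun _ _ => rfl, hH,
    range_inr_inter_fixedPoints (fun g => ρ g) fun _ _ => rfl, ← image_inr_mul,
    ← Set.image_union] at key

end Unitization

open Unitization in
/-- If a finite group `G` acts on a non-unital commutative `F`-algebra `J` by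
`F`-algebra automorphisms, with `|G|` invertible in `F`, and `H ≤ G` is any
subgroup, then any product of `[G:H]` elements of `J^H` lies in `J^H·J^G + J^G`
(the `F`-span of `J^H·J^G ∪ J^G`). -/
theorem stmt10 (F : Type*) [Field F] (G : Type*) [Group G] [Fintype G]
    (J : Type*) [NonUnitalCommRing J] [Module F J]
    [SMulCommClass F J J] [IsScalarTower F J J]
    (ρ : G →* RingAut J) (hlin : ∀ (g : G) (c : F) (x : J), ρ g (c • x) = c • ρ g x)
    (H : Subgroup G)
    (hchar : (Fintype.card G : F) ≠ 0)
    (JH : Set J) (hJH : JH = {x : J | ∀ h ∈ H, ρ h x = x})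
    (JG : Set J) (hJG : JG = {x : J | ∀ g : G, ρ g x = x})
    (a : J) (l : List J) (haH : a ∈ JH) (hlH : ∀ x ∈ l, x ∈ JH)
    (hlen : l.length + 1 = H.index) :
    l.foldl (· * ·) a ∈ Submodule.span F (JH * JG ∪ JG) := by
  subst hJH hJG
  obtain ⟨σ, hσ⟩ := H.exists_forall_mul_mem (n := (a :: l).length) hlen.symm
  have key := card_smul_prod_inr_mem_closure (F := F) ρ hlin H σ hσ (fun i => (a :: l)[i.1])
    fun i => List.forall_mem_cons.2 ⟨haH, hlH⟩ _ (List.getElem_mem _)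
  rw [Fin.prod_univ_fun_getElem, ← inr_foldl_mul, ← inr_smul, inr_mem_closure_image_inr_iff] at key
  rw [← Submodule.smul_mem_iff _ hchar, Nat.cast_smul_eq_nsmul]
  exact (AddSubgroup.closure_le (Submodule.span F _).toAddSubgroup).2 Submodule.subset_span key
end

section
/- Let p, q be primes with q dividing p−1, let G = Z/pZ ⋊ Z/q^nZ be a semidirect product where Z/q^nZ acts faithfully on A = Z/pZ, in particular q^n divides p−1. If S is a gapless sequence over the character group of A that is not divisible by any brick and whose support lies in a single G/A-orbit O of size q^n, then |S| ≤ 1 + 2 + ... + (q^n − q^{n−1}) = C(q^n − q^{n−1} + 1, 2). -/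
/-!
Write `v = u ^ q^(n-1)`, an element of order `q`. The orbit `O` is covered by the `q^(n-1)`
bricks `{v^k u^r x₀ : k < q}`, `r < q^(n-1)`, and brick-freeness says that every brick misses
a point of `S`, so the first row has at most `q^(n-1) (q - 1) = q^n - q^(n-1) =: m` elements.
The same fact shows that no row is all of `O`, so gaplessness makes the row sizes strictly
decrease as long as they are positive: the `i`-th row has at most `m - i` elements, and
summing the rows gives `|S| ≤ m + (m - 1) + ⋯ + 1`.
-/

open Finset

lemma sum_range_sub_le_choose_two (m K : ℕ) :
    ∑ i ∈ range K, (m - i) ≤ (m + 1).choose 2 := by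
  induction K generalizing m with
  | zero => simp
  | succ K ih =>
    rcases m with _ | m
    · simp
    rw [sum_range_succ', Nat.choose_succ_succ', Nat.choose_one_right]
    simp only [Nat.add_sub_add_right, Nat.sub_zero, Nat.reduceAdd]
    have := ih m
    omega

lemma le_sub_of_lt_of_pos {m : ℕ} {r : ℕ → ℕ} (h0 : r 0 ≤ m)
    (hr : ∀ i, 0 < r (i + 1) → r (i + 1) < r i) (i : ℕ) : r i ≤ m - i := by
  induction i with
  | zero => simpa using h0
  | succ i ih =>
    rcases Nat.eq_zero_or_pos (r (i + 1)) with h | h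
    · omega
    · have := hr i h
      omega

lemma sum_range_le_choose_two_of_lt_of_pos {m : ℕ} {r : ℕ → ℕ} (h0 : r 0 ≤ m)
    (hr : ∀ i, 0 < r (i + 1) → r (i + 1) < r i) (K : ℕ) :
    ∑ i ∈ range K, r i ≤ (m + 1).choose 2 :=
  (sum_le_sum fun i _ => le_sub_of_lt_of_pos h0 hr i).trans (sum_range_sub_le_choose_two m K)

lemma Finset.sum_eq_sum_range_card_filter_lt {ι : Type*} (s : Finset ι) (c : ι → ℕ) {M : ℕ}
    (hM : ∀ z ∈ s, c z ≤ M) :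
    ∑ z ∈ s, c z = ∑ i ∈ range M, #{z ∈ s | i < c z} := by
  simp_rw [card_filter]
  rw [sum_comm]
  refine sum_congr rfl fun z hz => ?_
  have hfilter : {i ∈ range M | i < c z} = range (c z) := by
    ext i
    simp only [mem_filter, mem_range]
    have := hM z hz
    omega
  rw [sum_boole, Nat.cast_id, hfilter, card_range]

section Rows

variable {α : Type*} [DecidableEq α]

/-- The row `R_{i+1} ∩ O` of the row decomposition of `S`; rows are indexed from `0`. -/
def Multiset.row (S : Multiset α) (O : Finset α) (i : ℕ) : Finset α :=
  O.filter (fun z => i + 1 ≤ S.count z)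

namespace Multiset

variable {S : Multiset α} {O : Finset α}

lemma mem_row {i : ℕ} {z : α} : z ∈ S.row O i ↔ z ∈ O ∧ i + 1 ≤ S.count z :=
  mem_filter

lemma mem_of_mem_row {i : ℕ} {z : α} (h : z ∈ S.row O i) : z ∈ S :=
  one_le_count_iff_mem.mp (by have := (mem_row.mp h).2; omega)

lemma row_succ_subset (i : ℕ) : S.row O (i + 1) ⊆ S.row O i :=
  fun _ hz => mem_row.mpr ⟨(mem_row.mp hz).1, by have := (mem_row.mp hz).2; omega⟩

lemma card_eq_sum_card_row (hS : S.toFinset ⊆ O) :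
    card S = ∑ i ∈ Finset.range (card S), #(S.row O i) := by
  calc card S = ∑ z ∈ O, count z S := by
        rw [← toFinset_sum_count_eq]
        exact sum_subset hS fun z _ hz => count_eq_zero.mpr (by simpa using hz)
    _ = _ := sum_eq_sum_range_card_filter_lt O _ fun z _ => count_le_card z S

lemma card_row_succ_lt {i : ℕ}
    (hgap : (S.row O i).Nonempty → S.row O i ≠ S.row O (i + 1) ∨ S.row O i = O)
    (hfull : S.row O i ≠ O) (hne : (S.row O (i + 1)).Nonempty) :
    #(S.row O (i + 1)) < #(S.row O i) := by
  have hsub := row_succ_subset (S := S) (O := O) i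
  have hne' := ((hgap (hne.mono hsub)).resolve_right hfull).symm
  exact Finset.card_lt_card (ssubset_of_subset_of_ne hsub hne')

end Multiset

end Rows

lemma Finset.card_le_mul_pred_of_subset_biUnion {α : Type*} [DecidableEq α] {T : Finset α}
    {N q : ℕ} {g : ℕ → ℕ → α}
    (hT : T ⊆ (range N).biUnion fun r => (range q).image (g r))
    (hmiss : ∀ r < N, ∃ k < q, g r k ∉ T) :
    #T ≤ N * (q - 1) := by
  have hpiece : ∀ r ∈ range N, #(T ∩ (range q).image (g r)) ≤ q - 1 := by
    intro r hr
    obtain ⟨k, hk, hkT⟩ := hmiss r (mem_range.mp hr)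
    have hssub : T ∩ (range q).image (g r) ⊂ (range q).image (g r) :=
      ssubset_of_subset_of_ne inter_subset_right fun h =>
        hkT (mem_of_mem_inter_left (h ▸ mem_image_of_mem (g r) (mem_range.mpr hk)))
    have := (card_lt_card hssub).trans_le (card_image_le.trans (card_range q).le)
    omega
  calc #T = #((range N).biUnion fun r => T ∩ (range q).image (g r)) := by
        rw [← inter_biUnion, inter_eq_left.mpr hT]
    _ ≤ ∑ r ∈ range N, #(T ∩ (range q).image (g r)) := card_biUnion_le
    _ ≤ ∑ _r ∈ range N, (q - 1) := sum_le_sum hpiece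
    _ = N * (q - 1) := by rw [sum_const, card_range, smul_eq_mul]

lemma image_pow_mul_range_subset_biUnion {M : Type*} [Monoid M] [DecidableEq M] (u x : M)
    (N q : ℕ) :
    (range (N * q)).image (fun j => u ^ j * x) ⊆
      (range N).biUnion fun r => (range q).image fun k => (u ^ N) ^ k * (u ^ r * x) := by
  intro z hz
  obtain ⟨j, hj, rfl⟩ := mem_image.mp hz
  have hjNq := mem_range.mp hj
  have hN : 0 < N := Nat.pos_of_ne_zero (by rintro rfl; simp at hjNq)
  refine mem_biUnion.mpr ⟨j % N, mem_range.mpr (Nat.mod_lt j hN), mem_image.mpr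
    ⟨j / N, mem_range.mpr ((Nat.div_lt_iff_lt_mul hN).mpr (by linarith)), ?_⟩⟩
  rw [← mul_assoc, ← pow_mul, ← pow_add, Nat.div_add_mod]

section Bricks

variable {M : Type*} [MonoidWithZero M] [IsRightCancelMulZero M]

lemma nodup_map_pow_mul_range {v y : M} (hy : y ≠ 0) :
    (Multiset.map (fun k => v ^ k * y) (Multiset.range (orderOf v))).Nodup :=
  (Multiset.nodup_range _).map_on fun _ ha _ hb hab =>
    pow_injOn_Iio_orderOf (Multiset.mem_range.mp ha) (Multiset.mem_range.mp hb)
      (mul_right_cancel₀ hy hab)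

lemma exists_pow_mul_notMem_of_not_le [DecidableEq M] {v y : M}
    (hy : y ≠ 0) {S : Multiset M}
    (h : ¬ Multiset.map (fun k => v ^ k * y) (Multiset.range (orderOf v)) ≤ S) :
    ∃ k < orderOf v, v ^ k * y ∉ S := by
  rw [Multiset.le_iff_subset (nodup_map_pow_mul_range hy), Multiset.subset_iff] at h
  push Not at h
  obtain ⟨_, hz, hzS⟩ := h
  obtain ⟨k, hk, rfl⟩ := Multiset.mem_map.mp hz
  exact ⟨k, Multiset.mem_range.mp hk, hzS⟩

end Bricks

theorem stmt16_general (p q n : ℕ) (hp : p.Prime) (hn : 0 < n)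
    (u : (ZMod p)ˣ) (hu : orderOf u = q ^ n)
    (x0 : ZMod p) (hx0 : x0 ≠ 0)
    (O : Finset (ZMod p))
    (hO : O = Finset.image (fun j => ((u : ZMod p) ^ j) * x0) (Finset.range (q ^ n)))
    (S : Multiset (ZMod p))
    (hsupp : S.toFinset ⊆ O)
    (hbrick : ∀ y : ZMod p, y ≠ 0 →
      ¬ (Multiset.map (fun j => ((u : ZMod p) ^ (q ^ (n - 1))) ^ j * y)
          (Multiset.range q) ≤ S))
    (hgap : ∀ i : ℕ,
      (O.filter (fun z => i + 1 ≤ S.count z)).Nonempty →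
      (O.filter (fun z => i + 1 ≤ S.count z) ≠ O.filter (fun z => i + 2 ≤ S.count z) ∨
       O.filter (fun z => i + 1 ≤ S.count z) = O)) :
    Multiset.card S ≤ Nat.choose (q ^ n - q ^ (n - 1) + 1) 2 := by
  have := Fact.mk hp
  set N := q ^ (n - 1)
  have hqn : q ^ n = N * q := by rw [← pow_succ, Nat.sub_add_cancel hn]
  have hq : 0 < q := Nat.pos_of_ne_zero fun h => by
    have := orderOf_pos u
    simp [hu, h, hn.ne'] at this
  have hv : orderOf ((u : ZMod p) ^ N) = q := by
    rw [orderOf_pow_of_dvd (by positivity) (by simp [orderOf_units, hu, hqn]), orderOf_units, hu,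
      hqn, Nat.mul_div_cancel_left q (by positivity)]
  have hmiss : ∀ y ≠ (0 : ZMod p), ∃ k < q, ((u : ZMod p) ^ N) ^ k * y ∉ S := fun y hy =>
    hv ▸ exists_pow_mul_notMem_of_not_le hy (hv ▸ hbrick y hy)
  have hcover : O ⊆ (range N).biUnion fun r =>
      (range q).image fun k => ((u : ZMod p) ^ N) ^ k * ((u : ZMod p) ^ r * x0) := by
    rw [hO, hqn]
    exact image_pow_mul_range_subset_biUnion _ _ N q
  have hrow0 : #(S.row O 0) ≤ N * (q - 1) :=
    card_le_mul_pred_of_subset_biUnion ((filter_subset _ _).trans hcover) fun r _ => by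
      obtain ⟨k, hk, hkS⟩ := hmiss _ (mul_ne_zero (pow_ne_zero r u.ne_zero) hx0)
      exact ⟨k, hk, fun h => hkS (Multiset.mem_of_mem_row h)⟩
  have hfull : ∀ i, S.row O i ≠ O := by
    intro i h
    obtain ⟨k, hk, hkS⟩ := hmiss x0 hx0
    have hkO : ((u : ZMod p) ^ N) ^ k * x0 ∈ O := by
      rw [hO, ← pow_mul, hqn]
      exact mem_image_of_mem _ (mem_range.mpr (Nat.mul_lt_mul_of_pos_left hk (by positivity)))
    rw [← h] at hkO
    exact hkS (Multiset.mem_of_mem_row hkO)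
  have hdecr : ∀ i, 0 < #(S.row O (i + 1)) → #(S.row O (i + 1)) < #(S.row O i) := fun i h =>
    Multiset.card_row_succ_lt (hgap i) (hfull i) (card_pos.mp h)
  rw [Multiset.card_eq_sum_card_row hsupp, hqn, show N * q - N = N * (q - 1) by
    rw [Nat.mul_sub, mul_one]]
  exact sum_range_le_choose_two_of_lt_of_pos hrow0 hdecr _

/-- Let `p, q` be primes and let `u` be a unit of `ℤ/pℤ` of order `q^n` (so
`ℤ/q^nℤ` acts faithfully on `ℤ/pℤ` by multiplication by powers of `u`). Let `O`
be the orbit of a nonzero element `x₀` (of size `q^n`). If a sequence `S` over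
`ℤ/pℤ` is supported in `O`, is not divisible by any brick (the orbit of an
element under the minimal nontrivial subgroup, generated by `u^(q^(n-1))`), and
is gapless (in terms of its row decomposition `R_i = {z ∈ O : count z ≥ i}`),
then `|S| ≤ 1 + 2 + ⋯ + (q^n − q^(n−1)) = C(q^n − q^(n−1) + 1, 2)`. -/
theorem stmt16 (p q n : ℕ) (hp : p.Prime) (hq : q.Prime) (hn : 0 < n)
    (u : (ZMod p)ˣ) (hu : orderOf u = q ^ n)
    (x0 : ZMod p) (hx0 : x0 ≠ 0)
    (O : Finset (ZMod p))
    (hO : O = Finset.image (fun j => ((u : ZMod p) ^ j) * x0) (Finset.range (q ^ n)))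
    (S : Multiset (ZMod p))
    (hsupp : S.toFinset ⊆ O)
    (hbrick : ∀ y : ZMod p, y ≠ 0 →
      ¬ (Multiset.map (fun j => ((u : ZMod p) ^ (q ^ (n - 1))) ^ j * y)
          (Multiset.range q) ≤ S))
    (hgap : ∀ i : ℕ,
      (O.filter (fun z => i + 1 ≤ S.count z)).Nonempty →
      (O.filter (fun z => i + 1 ≤ S.count z) ≠ O.filter (fun z => i + 2 ≤ S.count z) ∨
       O.filter (fun z => i + 1 ≤ S.count z) = O)) :
    Multiset.card S ≤ Nat.choose (q ^ n - q ^ (n - 1) + 1) 2 :=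
  stmt16_general p q n hp hn u hu x0 hx0 O hO S hsupp hbrick hgap
end
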